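/- arXiv:2007.14567 — 6 statements merged into one kernel-verified Lean document; each statement's English description precedes it below -/
import Mathlib

section
/- Let H ≥ 1 and n ≥ 1 be integers. The number of monic polynomials A(T) = T^n + a_{n-1}T^{n-1} + ... + a_0 with all coefficients a_j integers in [1,H] that are reducible over ℚ (i.e., factor as a product of two monic integer polynomials of positive degree) is at most n(1 + log H)·H^{n-1}. -/
open Polynomial

lemma rivin_eval_pos (A : Polynomial ℤ) (hA : A.Monic) (hd : 1 ≤ A.natDegree)
    (hc : ∀ i < A.natDegree, 1 ≤ A.coeff i) (r : ℝ) (hr : 0 ≤ r) :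
    0 < Polynomial.eval r (A.map (Int.castRingHom ℝ)) := by
  have hmap : (A.map (Int.castRingHom ℝ)).natDegree = A.natDegree :=
    A.natDegree_map_eq_of_injective (fun a b h => by
      simpa using h)
  rw [Polynomial.eval_eq_sum_range, hmap]
  apply Finset.sum_pos'
  · intro i hi
    apply mul_nonneg _ (pow_nonneg hr i)
    rw [Polynomial.coeff_map]
    simp only [Finset.mem_range] at hi
    rcases lt_or_eq_of_le (Nat.lt_succ_iff.mp hi) with h | h
    · have h1 := hc i h
      simp only [eq_intCast]
      exact_mod_cast le_trans zero_le_one h1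
    · rw [h]; have := hA.coeff_natDegree; simp [this]
  · refine ⟨0, by simp, ?_⟩
    rw [Polynomial.coeff_map]
    have h1 := hc 0 (by omega)
    simp only [pow_zero, mul_one, eq_intCast]
    exact_mod_cast lt_of_lt_of_le zero_lt_one h1

lemma rivin_coeff_zero_pos (A B C : Polynomial ℤ) (hB : B.Monic) (hC : C.Monic)
    (hBd : 1 ≤ B.natDegree) (hABC : A = B * C) (hd : 1 ≤ A.natDegree)
    (hc : ∀ i < A.natDegree, 1 ≤ A.coeff i) :
    1 ≤ B.coeff 0 := by
  have hA : A.Monic := hABC ▸ hB.mul hC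
  have h0 : A.coeff 0 = B.coeff 0 * C.coeff 0 := by rw [hABC, Polynomial.mul_coeff_zero]
  have hA0 : 1 ≤ A.coeff 0 := hc 0 (by omega)
  have hBne : B.coeff 0 ≠ 0 := by
    intro h; rw [h, zero_mul] at h0; omega
  by_contra hneg
  push_neg at hneg
  have hBneg : B.coeff 0 ≤ -1 := by omega
  set Br := B.map (Int.castRingHom ℝ) with hBr
  have hBrm : Br.Monic := hB.map _
  have hBrd : Br.natDegree = B.natDegree :=
    B.natDegree_map_eq_of_injective (fun a b h => by simpa using h)
  have htop : Filter.Tendsto (fun x => Polynomial.eval x Br) Filter.atTop Filter.atTop := by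
    apply Polynomial.tendsto_atTop_of_leadingCoeff_nonneg
    · rw [← Polynomial.natDegree_pos_iff_degree_pos]; omega
    · rw [hBrm.leadingCoeff]; norm_num
  obtain ⟨x, hx0, hx1⟩ : ∃ x : ℝ, 0 ≤ x ∧ 1 ≤ Polynomial.eval x Br := by
    have := (htop.eventually_ge_atTop 1).and (Filter.eventually_ge_atTop (0:ℝ))
    obtain ⟨x, h1, h2⟩ := this.exists
    exact ⟨x, h2, h1⟩
  have heval0 : Polynomial.eval 0 Br ≤ -1 := by
    rw [hBr, Polynomial.eval_map]
    simp only [Polynomial.eval₂_at_zero, eq_intCast]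
    exact_mod_cast hBneg
  obtain ⟨r, hr, hr0⟩ : ∃ r ∈ Set.Icc (0:ℝ) x, Polynomial.eval r Br = 0 := by
    have hcont : ContinuousOn (fun y => Polynomial.eval y Br) (Set.Icc 0 x) :=
      (Polynomial.continuous Br).continuousOn
    have hiv := intermediate_value_Icc hx0 hcont
    have h0mem : (0:ℝ) ∈ Set.Icc (Polynomial.eval 0 Br) (Polynomial.eval x Br) :=
      ⟨by linarith, by linarith⟩
    obtain ⟨r, hr, hr0⟩ := hiv h0mem
    exact ⟨r, hr, hr0⟩
  have hArpos := rivin_eval_pos A hA hd hc r hr.1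
  have : (A.map (Int.castRingHom ℝ)) = Br * (C.map (Int.castRingHom ℝ)) := by
    rw [hABC, Polynomial.map_mul]
  rw [this, Polynomial.eval_mul, hr0, zero_mul] at hArpos
  exact lt_irrefl _ hArpos

lemma rivin_int_eq (H : ℕ) (a b : ℤ) (ha1 : 1 ≤ a) (haH : a ≤ (H:ℤ)) (hb1 : 1 ≤ b)
    (hbH : b ≤ (H:ℤ)) (h : (a : ZMod H) = (b : ZMod H)) : a = b := by
  have hdvd : (H:ℤ) ∣ b - a := ((ZMod.intCast_eq_intCast_iff a b H).mp h).dvd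
  have habs : |b - a| < (H:ℤ) := by rw [abs_lt]; omega
  have := Int.eq_zero_of_abs_lt_dvd hdvd habs
  omega

/-- The packaged facts for a factorization of an element of Rivin's set. -/
lemma rivin_facts (H n : ℕ) (hn : 1 ≤ n) (A B C : Polynomial ℤ)
    (hAd : A.natDegree = n)
    (hAc : ∀ i < n, 1 ≤ A.coeff i ∧ A.coeff i ≤ (H:ℤ))
    (hBm : B.Monic) (hCm : C.Monic) (hBd : 1 ≤ B.natDegree) (hCd : 1 ≤ C.natDegree)
    (hABC : A = B * C) :
    1 ≤ B.coeff 0 ∧ 1 ≤ C.coeff 0 ∧ B.coeff 0 * C.coeff 0 ≤ (H:ℤ) ∧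
      B.natDegree + C.natDegree = n := by
  have hc1 : ∀ i < A.natDegree, 1 ≤ A.coeff i := fun i hi => (hAc i (hAd ▸ hi)).1
  have h1 : 1 ≤ B.coeff 0 :=
    rivin_coeff_zero_pos A B C hBm hCm hBd hABC (by omega) hc1
  have h2 : 1 ≤ C.coeff 0 :=
    rivin_coeff_zero_pos A C B hCm hBm hCd (by rw [hABC, mul_comm]) (by omega) hc1
  have h0 : A.coeff 0 = B.coeff 0 * C.coeff 0 := by rw [hABC, Polynomial.mul_coeff_zero]
  have h3 : B.coeff 0 * C.coeff 0 ≤ (H:ℤ) := h0 ▸ (hAc 0 (by omega)).2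
  have h4 : B.natDegree + C.natDegree = n := by
    rw [← hAd, hABC, hBm.natDegree_mul hCm]
  exact ⟨h1, h2, h3, h4⟩

open scoped Classical

/-- Rivin's encoding of a reducible polynomial. -/
noncomputable def rivinEnc (H n : ℕ) (A : Polynomial ℤ) :
    (ℕ × ℕ) × ℕ × (Fin (n-2) → ZMod H) :=
  if h : ∃ B C : Polynomial ℤ, B.Monic ∧ C.Monic ∧
      1 ≤ B.natDegree ∧ 1 ≤ C.natDegree ∧ A = B * C then
    (((h.choose.coeff 0).toNat, (h.choose_spec.choose.coeff 0).toNat),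
      h.choose.natDegree,
      fun j => if (j:ℕ) < h.choose.natDegree - 1
        then ((h.choose.coeff ((j:ℕ)+1) : ZMod H))
        else ((h.choose_spec.choose.coeff ((j:ℕ) - (h.choose.natDegree - 1) + 1) : ZMod H)))
  else ((0,0),0,fun _ => 0)

lemma rivinEnc_spec (H n : ℕ) (A : Polynomial ℤ)
    (hex : ∃ B C : Polynomial ℤ, B.Monic ∧ C.Monic ∧
      1 ≤ B.natDegree ∧ 1 ≤ C.natDegree ∧ A = B * C) :
    ∃ B C : Polynomial ℤ, B.Monic ∧ C.Monic ∧ 1 ≤ B.natDegree ∧ 1 ≤ C.natDegree ∧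
      A = B * C ∧ rivinEnc H n A =
        (((B.coeff 0).toNat, (C.coeff 0).toNat), B.natDegree,
          fun j : Fin (n-2) => if (j:ℕ) < B.natDegree - 1
            then ((B.coeff ((j:ℕ)+1) : ZMod H))
            else ((C.coeff ((j:ℕ) - (B.natDegree - 1) + 1) : ZMod H))) := by
  obtain ⟨h1, h2, h3, h4, h5⟩ := hex.choose_spec.choose_spec
  exact ⟨hex.choose, hex.choose_spec.choose, h1, h2, h3, h4, h5, by
    unfold rivinEnc; rw [dif_pos hex]⟩

/-- Rivin's bound: the number of monic polynomials of degree `n` with integer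
coefficients in `[1,H]` that are reducible over `ℚ` (equivalently, a product of two
monic integer polynomials of positive degree) is at most `n(1 + log H)·H^{n-1}`. -/
theorem stmt_0 (H n : ℕ) (hH : 1 ≤ H) (hn : 1 ≤ n) :
    (({A : Polynomial ℤ | A.Monic ∧ A.natDegree = n ∧
        (∀ i < n, 1 ≤ A.coeff i ∧ A.coeff i ≤ (H : ℤ)) ∧
        ∃ B C : Polynomial ℤ, B.Monic ∧ C.Monic ∧
          1 ≤ B.natDegree ∧ 1 ≤ C.natDegree ∧ A = B * C}.ncard : ℝ))
      ≤ n * (1 + Real.log H) * (H : ℝ) ^ (n - 1) := by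
  classical
  have hlog : (0:ℝ) ≤ Real.log H := Real.log_natCast_nonneg H
  by_cases hn2 : n < 2
  · have hn1 : n = 1 := by omega
    subst hn1
    have hempty : {A : Polynomial ℤ | A.Monic ∧ A.natDegree = 1 ∧
        (∀ i < 1, 1 ≤ A.coeff i ∧ A.coeff i ≤ (H : ℤ)) ∧
        ∃ B C : Polynomial ℤ, B.Monic ∧ C.Monic ∧
          1 ≤ B.natDegree ∧ 1 ≤ C.natDegree ∧ A = B * C} = ∅ := by
      ext A
      simp only [Set.mem_setOf_eq, Set.mem_empty_iff_false, iff_false, not_and]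
      rintro hAm hAd hAc ⟨B, C, hBm, hCm, hBd, hCd, rfl⟩
      rw [hBm.natDegree_mul hCm] at hAd; omega
    rw [hempty]
    simp only [Set.ncard_empty, Nat.cast_zero, Nat.cast_one, one_mul]
    positivity
  push_neg at hn2
  haveI : NeZero H := ⟨by omega⟩
  set S := {A : Polynomial ℤ | A.Monic ∧ A.natDegree = n ∧
        (∀ i < n, 1 ≤ A.coeff i ∧ A.coeff i ≤ (H : ℤ)) ∧
        ∃ B C : Polynomial ℤ, B.Monic ∧ C.Monic ∧
          1 ≤ B.natDegree ∧ 1 ≤ C.natDegree ∧ A = B * C} with hS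
  set Pfin : Finset (ℕ × ℕ) :=
    (Finset.Icc 1 H ×ˢ Finset.Icc 1 H).filter (fun p => p.1 * p.2 ≤ H) with hPfin
  set F : Finset ((ℕ × ℕ) × ℕ × (Fin (n-2) → ZMod H)) :=
    Pfin ×ˢ (Finset.Icc 1 (n-1)) ×ˢ Finset.univ with hF
  -- membership
  have hmem : ∀ A ∈ S, rivinEnc H n A ∈ (F : Set ((ℕ × ℕ) × ℕ × (Fin (n-2) → ZMod H))) := by
    intro A hA
    obtain ⟨hAm, hAd, hAc, hex⟩ := hA
    obtain ⟨B, C, hBm, hCm, hBd, hCd, hABC, hencA⟩ := rivinEnc_spec H n A hex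
    rw [hencA]
    obtain ⟨h1, h2, h3, h4⟩ := rivin_facts H n hn A B C hAd hAc hBm hCm hBd hCd hABC
    have hbH : B.coeff 0 ≤ (H:ℤ) := le_trans (le_mul_of_one_le_right (by omega) h2) h3
    have hcH : C.coeff 0 ≤ (H:ℤ) := le_trans (le_mul_of_one_le_left (by omega) h1) h3
    rw [hF]
    simp only [Finset.mem_coe, Finset.mem_product, Finset.mem_univ, and_true]
    constructor
    · rw [hPfin]
      simp only [Finset.mem_filter, Finset.mem_product, Finset.mem_Icc]
      refine ⟨⟨⟨by omega, by omega⟩, by omega, by omega⟩, ?_⟩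
      have : ((((B.coeff 0).toNat * (C.coeff 0).toNat : ℕ)) : ℤ) = B.coeff 0 * C.coeff 0 := by
        push_cast
        rw [Int.toNat_of_nonneg (by omega), Int.toNat_of_nonneg (by omega)]
      omega
    · simp only [Finset.mem_Icc]
      omega
  -- injectivity
  have hinj : Set.InjOn (rivinEnc H n) S := by
    rintro A hA A' hA' heq
    obtain ⟨hAm, hAd, hAc, hex⟩ := hA
    obtain ⟨hAm', hAd', hAc', hex'⟩ := hA'
    obtain ⟨B, C, hBm, hCm, hBd, hCd, hABC, hencA⟩ := rivinEnc_spec H n A hex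
    obtain ⟨B', C', hBm', hCm', hBd', hCd', hABC', hencA'⟩ := rivinEnc_spec H n A' hex'
    rw [hencA, hencA'] at heq
    obtain ⟨h1, h2, h3, h4⟩ := rivin_facts H n hn A B C hAd hAc hBm hCm hBd hCd hABC
    obtain ⟨h1', h2', h3', h4'⟩ := rivin_facts H n hn A' B' C' hAd' hAc' hBm' hCm' hBd' hCd' hABC'
    simp only [Prod.mk.injEq] at heq
    obtain ⟨⟨hb, hc⟩, hk, hg⟩ := heq
    have hb0 : B.coeff 0 = B'.coeff 0 := by omega
    have hc0 : C.coeff 0 = C'.coeff 0 := by omega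
    set k := B.natDegree with hkdef
    have hkB' : B'.natDegree = k := hk.symm
    have hkC : C.natDegree = n - k := by omega
    have hkC' : C'.natDegree = n - k := by omega
    have hkn : k ≤ n - 1 := by omega
    have hgfun : ∀ j : Fin (n-2),
        (if (j:ℕ) < k - 1 then ((B.coeff ((j:ℕ)+1) : ZMod H))
          else ((C.coeff ((j:ℕ) - (k - 1) + 1) : ZMod H)))
        = (if (j:ℕ) < k - 1 then ((B'.coeff ((j:ℕ)+1) : ZMod H))
          else ((C'.coeff ((j:ℕ) - (k - 1) + 1) : ZMod H))) := by
      intro j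
      have := congrFun hg j
      rwa [hkB'] at this
    have hBmod : ∀ i, ((B.coeff i : ZMod H)) = ((B'.coeff i : ZMod H)) := by
      intro i
      rcases Nat.eq_zero_or_pos i with rfl | hi
      · rw [hb0]
      rcases lt_trichotomy i k with hik | rfl | hik
      · have hj : i - 1 < n - 2 := by omega
        have := hgfun ⟨i - 1, hj⟩
        rw [if_pos (by simp; omega), if_pos (by simp; omega)] at this
        simpa only [show i - 1 + 1 = i by omega] using this
      · rw [hBm.coeff_natDegree, ← hkB', hBm'.coeff_natDegree]
      · rw [Polynomial.coeff_eq_zero_of_natDegree_lt (by omega),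
          Polynomial.coeff_eq_zero_of_natDegree_lt (by omega)]
    have hCmod : ∀ i, ((C.coeff i : ZMod H)) = ((C'.coeff i : ZMod H)) := by
      intro i
      rcases Nat.eq_zero_or_pos i with rfl | hi
      · rw [hc0]
      rcases lt_trichotomy i (n - k) with hik | hik | hik
      · have hj : (k - 1) + (i - 1) < n - 2 := by omega
        have := hgfun ⟨(k - 1) + (i - 1), hj⟩
        rw [if_neg (by simp only [Fin.val_mk]; omega),
          if_neg (by simp only [Fin.val_mk]; omega)] at this
        simpa only [show (k - 1) + (i - 1) - (k - 1) + 1 = i by omega] using this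
      · have hi2 : i = C.natDegree := by omega
        subst hi2
        rw [hCm.coeff_natDegree, show C.natDegree = C'.natDegree by omega,
          hCm'.coeff_natDegree]
      · rw [Polynomial.coeff_eq_zero_of_natDegree_lt (by omega),
          Polynomial.coeff_eq_zero_of_natDegree_lt (by omega)]
    have hBmap : B.map (Int.castRingHom (ZMod H)) = B'.map (Int.castRingHom (ZMod H)) := by
      ext i
      simp only [Polynomial.coeff_map, eq_intCast]
      exact hBmod i
    have hCmap : C.map (Int.castRingHom (ZMod H)) = C'.map (Int.castRingHom (ZMod H)) := by
      ext i
      simp only [Polynomial.coeff_map, eq_intCast]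
      exact hCmod i
    have hAmap : A.map (Int.castRingHom (ZMod H)) = A'.map (Int.castRingHom (ZMod H)) := by
      rw [hABC, hABC', Polynomial.map_mul, Polynomial.map_mul, hBmap, hCmap]
    ext i
    rcases lt_trichotomy i n with hin | hin | hin
    · have hcong : ((A.coeff i : ZMod H)) = ((A'.coeff i : ZMod H)) := by
        have := congrArg (fun p => Polynomial.coeff p i) hAmap
        simpa only [Polynomial.coeff_map, eq_intCast] using this
      exact rivin_int_eq H _ _ (hAc i hin).1 (hAc i hin).2 (hAc' i hin).1 (hAc' i hin).2 hcong
    · rw [hin, show n = A.natDegree from hAd.symm, hAm.coeff_natDegree,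
        show A.natDegree = A'.natDegree by omega, hAm'.coeff_natDegree]
    · rw [Polynomial.coeff_eq_zero_of_natDegree_lt (by omega),
        Polynomial.coeff_eq_zero_of_natDegree_lt (by omega)]
  -- cardinality bound
  have hcard : S.ncard ≤ F.card := by
    have := Set.ncard_le_ncard_of_injOn (rivinEnc H n) hmem hinj F.finite_toSet
    rwa [Set.ncard_coe_finset] at this
  have hFcard : F.card = Pfin.card * ((n - 1) * H ^ (n - 2)) := by
    rw [hF, Finset.card_product, Finset.card_product, Nat.card_Icc, Finset.card_univ,
      Fintype.card_fun, ZMod.card, Fintype.card_fin,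
      (by omega : n - 1 + 1 - 1 = n - 1)]
  -- bound on Pfin.card
  have hPbound : Pfin.card ≤ ∑ b ∈ Finset.Icc 1 H, H / b := by
    calc Pfin.card ≤ ((Finset.Icc 1 H).biUnion fun b => {b} ×ˢ Finset.Icc 1 (H / b)).card := by
          apply Finset.card_le_card
          intro p hp
          rw [hPfin] at hp
          simp only [Finset.mem_filter, Finset.mem_product, Finset.mem_Icc] at hp
          obtain ⟨⟨⟨hb1, hbH⟩, hc1, hcH⟩, hpq⟩ := hp
          rw [Finset.mem_biUnion]
          refine ⟨p.1, Finset.mem_Icc.mpr ⟨hb1, hbH⟩, ?_⟩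
          rw [Finset.mem_product]
          refine ⟨Finset.mem_singleton_self _, Finset.mem_Icc.mpr ⟨hc1, ?_⟩⟩
          rw [Nat.le_div_iff_mul_le (by omega)]
          rw [mul_comm]; exact hpq
      _ ≤ ∑ b ∈ Finset.Icc 1 H, ({b} ×ˢ Finset.Icc 1 (H / b)).card := Finset.card_biUnion_le
      _ = ∑ b ∈ Finset.Icc 1 H, H / b := by
          apply Finset.sum_congr rfl
          intro b _
          rw [Finset.card_product, Finset.card_singleton, Nat.card_Icc, one_mul,
            Nat.add_sub_cancel]
  have hPreal : (Pfin.card : ℝ) ≤ H * (1 + Real.log H) := by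
    calc (Pfin.card : ℝ) ≤ ((∑ b ∈ Finset.Icc 1 H, H / b : ℕ) : ℝ) := by exact_mod_cast hPbound
      _ = ∑ b ∈ Finset.Icc 1 H, ((H / b : ℕ) : ℝ) := by push_cast; ring
      _ ≤ ∑ b ∈ Finset.Icc 1 H, (H : ℝ) / b := by
          apply Finset.sum_le_sum
          intro b _
          exact Nat.cast_div_le
      _ = (H : ℝ) * ∑ b ∈ Finset.Icc 1 H, ((b : ℝ))⁻¹ := by
          rw [Finset.mul_sum]
          apply Finset.sum_congr rfl
          intro b _
          rw [div_eq_mul_inv]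
      _ = (H : ℝ) * ((harmonic H : ℚ) : ℝ) := by
          congr 1
          rw [harmonic_eq_sum_Icc]
          push_cast
          ring
      _ ≤ (H : ℝ) * (1 + Real.log H) := by
          apply mul_le_mul_of_nonneg_left (harmonic_le_one_add_log H)
          positivity
  -- final assembly
  have hHpow : (H : ℝ) * (H : ℝ) ^ (n - 2) = (H : ℝ) ^ (n - 1) := by
    rw [← pow_succ']
    congr 1
    omega
  calc (S.ncard : ℝ) ≤ (F.card : ℝ) := by exact_mod_cast hcard
    _ = (Pfin.card : ℝ) * ((n - 1 : ℕ) * (H : ℝ) ^ (n - 2)) := by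
        rw [hFcard]; push_cast; ring
    _ ≤ (H * (1 + Real.log H)) * ((n - 1 : ℕ) * (H : ℝ) ^ (n - 2)) := by
        apply mul_le_mul_of_nonneg_right hPreal
        positivity
    _ = ((n - 1 : ℕ) : ℝ) * (1 + Real.log H) * ((H : ℝ) * (H : ℝ) ^ (n - 2)) := by ring
    _ ≤ (n : ℝ) * (1 + Real.log H) * ((H : ℝ) * (H : ℝ) ^ (n - 2)) := by
        apply mul_le_mul_of_nonneg_right
        · apply mul_le_mul_of_nonneg_right _ (by positivity)
          exact_mod_cast Nat.cast_le.mpr (Nat.sub_le n 1)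
        · positivity
    _ = (n : ℝ) * (1 + Real.log H) * (H : ℝ) ^ (n - 1) := by rw [hHpow]
end

section
/- Let P > 1 be an integer and μ a probability measure on ℤ. Define α = max over factorizations QR = P with Q > 1 and over ℓ ∈ ℤ/Rℤ of (1/√Q)·∑_{k ∈ ℤ/Qℤ} |μ̂(k/Q + ℓ/R)|, and β = max over k ∈ ℤ/Pℤ with k ≢ 0 (mod P) of |μ̂(k/P)|. If α ≤ 1, then β ≤ 1 - 1/P². -/
/-!
Write `k / P = k' / Q` in lowest terms, so that `1 < Q ∣ P`. Fourier inversion on `ℤ/Qℤ`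
bounds the `μ`-mass of every residue class mod `Q` by `(1/Q) ∑_j |μ̂(j/Q)|`, which is at most
`1/√Q < 3/4` by `α ≤ 1` (with `ℓ = 0`). Hence pairs `a ≢ b (mod Q)` carry `μ ⊗ μ`-mass at least
`1/4`, and for those `1 - cos(2π(a - b)k'/Q) ≥ 8‖(a - b)k'/Q‖² ≥ 8/Q²`. Expanding
`|μ̂(k'/Q)|² = ∑_{a,b} μ(a)μ(b) cos(2π(a - b)k'/Q)` gives `|μ̂(k/P)|² ≤ 1 - 2/Q² ≤ (1 - 1/P²)²`.
-/

open Real ComplexConjugate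
open Complex (I)

lemma exists_coprime_div_eq {P : ℕ} {k : ℤ} (hP : P ≠ 0) (hk : ¬ (P : ℤ) ∣ k) :
    ∃ Q R : ℕ, ∃ k' : ℤ, Q * R = P ∧ 1 < Q ∧ IsCoprime (Q : ℤ) k' ∧ (k : ℝ) / P = k' / Q := by
  set q : ℚ := k / P
  have hden : q.den ∣ P := by
    have := Rat.den_dvd k P
    rwa [Rat.divInt_eq_div, Int.cast_natCast, Int.natCast_dvd_natCast] at this
  obtain ⟨R, hR⟩ := hden
  refine ⟨q.den, R, q.num, hR.symm, ?_, ?_, ?_⟩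
  · refine lt_of_le_of_ne q.den_pos fun h1 => hk ⟨q.num, ?_⟩
    have : (q.num : ℚ) = k / P := (Rat.den_eq_one_iff q).1 h1.symm
    field_simp at this
    rw [mul_comm]
    exact_mod_cast this.symm
  · rw [Int.isCoprime_iff_nat_coprime, Int.natAbs_natCast]
    exact q.reduced.symm
  · rw [← Rat.cast_def q]; push_cast [q]; rfl

lemma sqrt_div_self_le_three_fourths {x : ℝ} (hx : 2 ≤ x) : √x / x ≤ 3 / 4 := by
  have h : 4 / 3 ≤ √x := Real.le_sqrt_of_sq_le (by linarith)
  rw [Real.sqrt_div_self', div_le_iff₀ (by positivity)]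
  linarith

lemma summable_ite_zero {α β : Type*} [UniformSpace α] [AddCommGroup α] [IsUniformAddGroup α]
    [CompleteSpace α] {f : β → α} (hf : Summable f) (p : β → Prop) [DecidablePred p] :
    Summable fun x => if p x then f x else 0 := by
  convert hf.indicator {x | p x} using 1
  ext x
  simp [Set.indicator_apply]

namespace IntFourier

noncomputable def e (x : ℝ) : ℂ := Complex.exp (2 * π * I * x)

lemma e_eq_exp_ofReal_mul_I (x : ℝ) : e x = Complex.exp ((2 * π * x : ℝ) * I) := by
  rw [e]; push_cast; ring_nf

lemma norm_e (x : ℝ) : ‖e x‖ = 1 := by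
  rw [e_eq_exp_ofReal_mul_I, Complex.norm_exp_ofReal_mul_I]

lemma re_e (x : ℝ) : (e x).re = cos (2 * π * x) := by
  rw [e_eq_exp_ofReal_mul_I, Complex.exp_ofReal_mul_I_re]

lemma e_add (x y : ℝ) : e (x + y) = e x * e y := by
  simp only [e, ← Complex.exp_add]; push_cast; ring_nf

lemma conj_e (x : ℝ) : conj (e x) = e (-x) := by
  rw [e_eq_exp_ofReal_mul_I, e_eq_exp_ofReal_mul_I, ← Complex.exp_conj, map_mul,
    Complex.conj_ofReal, Complex.conj_I]
  push_cast; ring_nf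

lemma e_intCast (n : ℤ) : e n = 1 := by
  rw [e, ← Complex.exp_int_mul_two_pi_mul_I n]; push_cast; ring_nf

lemma e_natCast_mul (j : ℕ) (x : ℝ) : e (j * x) = e x ^ j := by
  rw [e, e, ← Complex.exp_nat_mul]; push_cast; ring_nf

lemma e_intCast_div_eq_one_iff {Q : ℕ} (hQ : Q ≠ 0) (n : ℤ) :
    e (n / Q) = 1 ↔ (Q : ℤ) ∣ n := by
  rw [← (Complex.isPrimitiveRoot_exp Q hQ).zpow_eq_one_iff_dvd, ← Complex.exp_int_mul, e]
  push_cast; ring_nf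

lemma sum_range_e_mul_div {Q : ℕ} (hQ : Q ≠ 0) (n : ℤ) :
    ∑ j ∈ Finset.range Q, e (n * j / Q) = if (Q : ℤ) ∣ n then (Q : ℂ) else 0 := by
  have hpow : ∀ j : ℕ, e (n * j / Q) = e (n / Q) ^ j := fun j => by
    rw [← e_natCast_mul]; ring_nf
  simp only [hpow]
  split_ifs with h
  · simp [(e_intCast_div_eq_one_iff hQ n).2 h]
  · rw [geom_sum_eq ((e_intCast_div_eq_one_iff hQ n).not.2 h), ← e_natCast_mul,
      mul_div_cancel₀ _ (by exact_mod_cast hQ), e_intCast, sub_self, zero_div]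

lemma cos_two_pi_le_one_sub_sq (x : ℝ) : cos (2 * π * x) ≤ 1 - 8 * (x - round x) ^ 2 := by
  have hper : cos (2 * π * x) = cos (2 * π * (x - round x)) := by
    rw [← cos_add_int_mul_two_pi (2 * π * (x - round x)) (round x)]; ring_nf
  have hsmall : |2 * π * (x - round x)| ≤ π := by
    rw [abs_mul, abs_of_pos (by positivity)]
    nlinarith [abs_sub_round x, pi_pos]
  rw [hper]
  refine (cos_le_one_sub_mul_cos_sq hsmall).trans_eq ?_
  field_simp
  ring

lemma cos_two_pi_intCast_div_le {Q : ℕ} (m : ℤ) (hm : ¬ (Q : ℤ) ∣ m) :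
    cos (2 * π * (m / Q)) ≤ 1 - 8 / (Q : ℝ) ^ 2 := by
  rcases Nat.eq_zero_or_pos Q with rfl | hQ
  · simp
  set t : ℝ := m / Q - round ((m : ℝ) / Q)
  have hint : (Q : ℝ) * t = ((m - Q * round ((m : ℝ) / Q) : ℤ) : ℝ) := by
    simp only [t]; push_cast; field_simp
  have hne : m - Q * round ((m : ℝ) / Q) ≠ 0 := fun h => hm ⟨_, sub_eq_zero.1 h⟩
  have hQt : 1 ≤ |(Q : ℝ) * t| := by rw [hint]; exact_mod_cast Int.one_le_abs hne
  have ht : 1 / (Q : ℝ) ^ 2 ≤ t ^ 2 := by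
    rw [div_le_iff₀ (by positivity), ← mul_pow, mul_comm, ← sq_abs]
    nlinarith
  have h8 : 8 / (Q : ℝ) ^ 2 = 8 * (1 / (Q : ℝ) ^ 2) := by ring
  linarith [cos_two_pi_le_one_sub_sq ((m : ℝ) / Q)]

variable {μ : ℤ → ℝ}

noncomputable def fourierSum (μ : ℤ → ℝ) (θ : ℝ) : ℂ := ∑' a : ℤ, (μ a : ℂ) * e (a * θ)

noncomputable def residueMass (μ : ℤ → ℝ) (Q : ℕ) (c : ℤ) : ℝ :=
  ∑' a : ℤ, if (Q : ℤ) ∣ a - c then μ a else 0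

noncomputable def collisionMass (μ : ℤ → ℝ) (Q : ℕ) : ℝ :=
  ∑' p : ℤ × ℤ, if (Q : ℤ) ∣ p.1 - p.2 then μ p.1 * μ p.2 else 0

lemma norm_ofReal_mul_e (c x : ℝ) : ‖(c : ℂ) * e x‖ = |c| := by
  rw [norm_mul, norm_e, mul_one, Complex.norm_real, Real.norm_eq_abs]

lemma summable_norm_ofReal_mul_e (hμ : Summable μ) (f : ℤ → ℝ) :
    Summable fun a => ‖(μ a : ℂ) * e (f a)‖ := by
  simpa only [norm_ofReal_mul_e] using hμ.abs

lemma norm_fourierSum_sq (hμ : Summable μ) (θ : ℝ) :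
    ‖fourierSum μ θ‖ ^ 2 = ∑' p : ℤ × ℤ, μ p.1 * μ p.2 * cos (2 * π * ((p.1 - p.2 : ℤ) * θ)) := by
  have hconj : conj (fourierSum μ θ) = ∑' b : ℤ, (μ b : ℂ) * e (-(b * θ)) := by
    simp only [fourierSum, Complex.conj_tsum, map_mul, Complex.conj_ofReal, conj_e]
  have hterm (p : ℤ × ℤ) : (μ p.1 : ℂ) * e (p.1 * θ) * ((μ p.2 : ℂ) * e (-(p.2 * θ)))
      = ((μ p.1 * μ p.2 : ℝ) : ℂ) * e ((p.1 - p.2 : ℤ) * θ) := by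
    rw [show ((p.1 - p.2 : ℤ) : ℝ) * θ = p.1 * θ + -(p.2 * θ) by push_cast; ring, e_add]
    push_cast; ring
  have hf := summable_norm_ofReal_mul_e hμ fun a => a * θ
  have hg := summable_norm_ofReal_mul_e hμ fun b => -(b * θ)
  rw [← Complex.normSq_eq_norm_sq, ← Complex.ofReal_re (Complex.normSq _), ← Complex.mul_conj,
    hconj, fourierSum, tsum_mul_tsum_of_summable_norm hf hg,
    Complex.re_tsum (summable_mul_of_summable_norm hf hg)]
  refine tsum_congr fun p => ?_
  rw [hterm, Complex.re_ofReal_mul, re_e]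

lemma sum_fourierSum_mul_e (hμ : Summable μ) {Q : ℕ} (hQ : Q ≠ 0) (c : ℤ) :
    ∑ j ∈ Finset.range Q, fourierSum μ (j / Q) * e (-(c * j / Q)) = Q * residueMass μ Q c := by
  have hterm (j : ℕ) : fourierSum μ (j / Q) * e (-(c * j / Q))
      = ∑' a : ℤ, (μ a : ℂ) * e ((a - c : ℤ) * j / Q) := by
    rw [fourierSum, ← tsum_mul_right]
    refine tsum_congr fun a => ?_
    rw [mul_assoc, ← e_add]; push_cast; ring_nf
  simp only [hterm]
  rw [← Summable.tsum_finsetSum fun j _ => (summable_norm_ofReal_mul_e hμ _).of_norm]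
  simp only [← Finset.mul_sum, sum_range_e_mul_div hQ, residueMass, Complex.ofReal_tsum,
    ← tsum_mul_left]
  refine tsum_congr fun a => ?_
  split_ifs <;> simp [mul_comm]

lemma residueMass_le (hμ : Summable μ) {Q : ℕ} (hQ : Q ≠ 0) (c : ℤ) :
    residueMass μ Q c ≤ (∑ j ∈ Finset.range Q, ‖fourierSum μ (j / Q)‖) / Q := by
  rw [le_div_iff₀ (by positivity), mul_comm]
  calc (Q : ℝ) * residueMass μ Q c ≤ ‖(Q : ℂ) * residueMass μ Q c‖ := by
        rw [← Complex.ofReal_natCast, ← Complex.ofReal_mul, Complex.norm_real]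
        exact Real.le_norm_self _
    _ = ‖∑ j ∈ Finset.range Q, fourierSum μ (j / Q) * e (-(c * j / Q))‖ := by
        rw [sum_fourierSum_mul_e hμ hQ c]
    _ ≤ ∑ j ∈ Finset.range Q, ‖fourierSum μ (j / Q)‖ :=
        (norm_sum_le _ _).trans (Finset.sum_le_sum fun j _ => by rw [norm_mul, norm_e, mul_one])

lemma residueMass_nonneg (hμ0 : ∀ a, 0 ≤ μ a) (Q : ℕ) (c : ℤ) : 0 ≤ residueMass μ Q c :=
  tsum_nonneg fun a => by split_ifs <;> simp [hμ0]

lemma collisionMass_le (hμ0 : ∀ a, 0 ≤ μ a) (hμ : Summable μ) (htotal : ∑' a, μ a = 1)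
    {Q : ℕ} {M : ℝ} (hM : ∀ c, residueMass μ Q c ≤ M) : collisionMass μ Q ≤ M := by
  have hinner (a : ℤ) : ∑' b : ℤ, (if (Q : ℤ) ∣ a - b then μ a * μ b else 0)
      = μ a * residueMass μ Q a := by
    rw [residueMass, ← tsum_mul_left]
    refine tsum_congr fun b => ?_
    simp only [dvd_sub_comm (a := (Q : ℤ)) (b := a), mul_ite, mul_zero]
  have hle (a : ℤ) : μ a * residueMass μ Q a ≤ μ a * M :=
    mul_le_mul_of_nonneg_left (hM a) (hμ0 a)
  have hsumm : Summable fun a => μ a * residueMass μ Q a :=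
    Summable.of_nonneg_of_le (fun a => mul_nonneg (hμ0 a) (residueMass_nonneg hμ0 Q a)) hle
      (hμ.mul_right M)
  rw [collisionMass, Summable.tsum_prod' (summable_ite_zero (hμ.mul_of_nonneg hμ hμ0 hμ0) _)
    fun a => summable_ite_zero (hμ.mul_left (μ a)) _]
  simp only [hinner]
  calc ∑' a, μ a * residueMass μ Q a ≤ ∑' a, μ a * M :=
        Summable.tsum_le_tsum hle hsumm (hμ.mul_right M)
    _ = M := by rw [tsum_mul_right, htotal, one_mul]

lemma norm_fourierSum_sq_le (hμ0 : ∀ a, 0 ≤ μ a) (hμ : Summable μ) (htotal : ∑' a, μ a = 1)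
    {Q : ℕ} {k : ℤ} (hk : IsCoprime (Q : ℤ) k) :
    ‖fourierSum μ (k / Q)‖ ^ 2 ≤ 1 - 8 / Q ^ 2 * (1 - collisionMass μ Q) := by
  set w : ℤ × ℤ → ℝ := fun p => μ p.1 * μ p.2
  have hw0 (p : ℤ × ℤ) : 0 ≤ w p := mul_nonneg (hμ0 _) (hμ0 _)
  have hw : Summable w := hμ.mul_of_nonneg hμ hμ0 hμ0
  have hw1 : ∑' p, w p = 1 := by rw [← hμ.tsum_mul_tsum hμ hw, htotal, one_mul]
  have hS := summable_ite_zero hw fun p => (Q : ℤ) ∣ p.1 - p.2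
  have hpoint (p : ℤ × ℤ) : w p * cos (2 * π * ((p.1 - p.2 : ℤ) * (k / Q))) ≤
      w p - 8 / Q ^ 2 * (w p - if (Q : ℤ) ∣ p.1 - p.2 then w p else 0) := by
    split_ifs with h
    · simpa using mul_le_of_le_one_right (hw0 p) (cos_le_one _)
    · have hcos : cos (2 * π * ((p.1 - p.2 : ℤ) * (k / Q))) ≤ 1 - 8 / Q ^ 2 := by
        simpa only [Int.cast_mul, mul_div_assoc] using
          cos_two_pi_intCast_div_le _ fun hdvd => h (hk.dvd_of_dvd_mul_right hdvd)
      nlinarith [mul_le_mul_of_nonneg_left hcos (hw0 p)]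
  rw [norm_fourierSum_sq hμ]
  calc _ ≤ ∑' p, (w p - 8 / Q ^ 2 * (w p - if (Q : ℤ) ∣ p.1 - p.2 then w p else 0)) := by
        refine Summable.tsum_le_tsum hpoint (Summable.of_norm_bounded hw fun p => ?_)
          (hw.sub ((hw.sub hS).mul_left _))
        rw [norm_mul, Real.norm_of_nonneg (hw0 p)]
        exact mul_le_of_le_one_right (hw0 p) (abs_cos_le_one _)
    _ = _ := by
        rw [hw.tsum_sub ((hw.sub hS).mul_left _), tsum_mul_left, hw.tsum_sub hS, hw1,
          collisionMass]

end IntFourier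

open IntFourier

/-- Let `P > 1` and `μ` a probability measure on `ℤ`, with Fourier transform
`μ̂(θ) = ∑_a μ(a) e(aθ)`. If for every factorization `QR = P` with `Q > 1` and every
`ℓ`, one has `(1/√Q) ∑_{k mod Q} |μ̂(k/Q + ℓ/R)| ≤ 1` (i.e. `α ≤ 1`), then
`|μ̂(k/P)| ≤ 1 - 1/P²` for all `k ≢ 0 (mod P)` (i.e. `β ≤ 1 - 1/P²`). -/
theorem stmt_2 (P : ℕ) (hP : 1 < P) (μ : ℤ → ℝ)
    (hnonneg : ∀ a, 0 ≤ μ a) (hsummable : Summable μ)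
    (htotal : ∑' a : ℤ, μ a = 1)
    (hα : ∀ Q R : ℕ, Q * R = P → 1 < Q → ∀ ℓ : ℤ,
      (1 / Real.sqrt Q) * ∑ k ∈ Finset.range Q,
        ‖∑' a : ℤ, (μ a : ℂ) *
            Complex.exp (2 * Real.pi * Complex.I *
              ((a : ℂ) * ((k : ℂ) / Q + (ℓ : ℂ) / R)))‖ ≤ 1) :
    ∀ k : ℤ, ¬ ((P : ℤ) ∣ k) →
      ‖∑' a : ℤ, (μ a : ℂ) *
          Complex.exp (2 * Real.pi * Complex.I * ((a : ℂ) * ((k : ℂ) / P)))‖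
        ≤ 1 - 1 / (P : ℝ) ^ 2 := by
  intro k hk
  obtain ⟨Q, R, k', hQR, hQ, hcop, hkQ⟩ := exists_coprime_div_eq (by omega) hk
  have hQP : (Q : ℝ) ≤ P := mod_cast Nat.le_of_dvd (by omega) (Dvd.intro R hQR)
  have hsum : ∑ j ∈ Finset.range Q, ‖fourierSum μ (j / Q)‖ ≤ √Q := by
    have := hα Q R hQR hQ 0
    rw [one_div_mul_eq_div, div_le_one (by positivity)] at this
    simpa [fourierSum, e] using this
  have hmass (c : ℤ) : residueMass μ Q c ≤ 3 / 4 := by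
    refine (residueMass_le hsummable (by omega) c).trans ?_
    grw [hsum]
    exact sqrt_div_self_le_three_fourths (by exact_mod_cast hQ)
  have hgoal : ∑' a : ℤ, (μ a : ℂ) * Complex.exp (2 * π * I * ((a : ℂ) * ((k : ℂ) / P)))
      = fourierSum μ (k' / Q) := by
    rw [← hkQ]; simp [fourierSum, e]
  rw [hgoal]
  have hP2 : (2 : ℝ) ≤ P := by exact_mod_cast hP
  refine le_of_pow_le_pow_left₀ two_ne_zero ?_ ?_
  · rw [sub_nonneg, div_le_one (by positivity)]
    nlinarith
  calc ‖fourierSum μ (k' / Q)‖ ^ 2 ≤ 1 - 8 / (Q : ℝ) ^ 2 * (1 - 3 / 4) := by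
        refine (norm_fourierSum_sq_le hnonneg hsummable htotal hcop).trans ?_
        gcongr
        exact collisionMass_le hnonneg hsummable htotal hmass
    _ = 1 - 2 / (Q : ℝ) ^ 2 := by ring
    _ ≤ 1 - 2 / (P : ℝ) ^ 2 := by gcongr
    _ ≤ (1 - 1 / (P : ℝ) ^ 2) ^ 2 := by
        have : 2 / (P : ℝ) ^ 2 = 2 * (1 / (P : ℝ) ^ 2) := by ring
        nlinarith [sq_nonneg (1 / (P : ℝ) ^ 2)]
end

section
/- Fix m₀ ∈ ℕ. Then #{d ∈ ℕ : φ(d) ≤ m₀} = O(m₀), where φ is Euler's totient function. More precisely, #{d : φ(d) ≤ m₀} ≤ m₀ + ∑_{d > m₀} (m₀/φ(d))², and ∑_{d ≤ x}(d/φ(d))² = O(x) for all x ≥ 1. -/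
/-!
Since `φ d = d ∏_{p ∣ d} (1 - 1/p)`, the function `(d/φ d)²` is the divisor sum
`∑_{e ∣ d} μ²(e) h(e)` with `h(e) = ∏_{p ∣ e} ((1 - 1/p)⁻² - 1)`, and `h(p)/p ≤ 8/p²`.
Swapping the sums, `∑_{d ≤ N} (d/φ d)² w(d) = ∑_{e ≤ N} μ²(e) h(e) ∑_{k ≤ N/e} w(ek)` for any `w`,
and `∑_{e ≤ N} μ²(e) h(e)/e ≤ ∏_{p ≤ N} (1 + 8/p²) ≤ exp 8`. With `w = 1` this gives
`∑_{d ≤ N} (d/φ d)² ≤ N exp 8`; with `w(d) = d⁻² 1_{d > m}` it gives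
`∑_{d > m} (m/φ d)² ≤ 2 m exp 8`. Every `d > m` with `φ d ≤ m` contributes at least `1` to this
last sum, and at most `m` values `d ≤ m` remain.
-/

open Nat Finset Real

theorem Nat.prod_primeFactors_one_add {R : Type*} [CommSemiring R] (f : ℕ → R) {n : ℕ}
    (hn : n ≠ 0) :
    ∏ p ∈ n.primeFactors, (1 + f p) =
      ∑ e ∈ n.divisors with Squarefree e, ∏ p ∈ e.primeFactors, f p := by
  rw [prod_one_add, sum_divisors_filter_squarefree hn, Nat.factors_eq]
  refine sum_congr rfl fun t ht => ?_
  rw [Finset.prod_val]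
  exact congrArg (∏ p ∈ ·, f p)
    (Nat.primeFactors_prod fun p hp => Nat.prime_of_mem_primeFactors (mem_powerset.1 ht hp)).symm

theorem Nat.sum_Ioc_sum_divisors {M : Type*} [AddCommMonoid M] (F : ℕ → ℕ → M) (N : ℕ) :
    ∑ d ∈ Ioc 0 N, ∑ e ∈ d.divisors, F e d =
      ∑ e ∈ Ioc 0 N, ∑ k ∈ Ioc 0 (N / e), F e (e * k) := by
  rw [sum_comm' (t' := Ioc 0 N) (s' := fun e => {d ∈ Ioc 0 N | e ∣ d})]
  · refine sum_congr rfl fun e he => ?_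
    symm
    rw [mem_Ioc] at he
    apply sum_nbij' (e * ·) (· / e) <;> intro k hk <;>
      simp only [mem_Ioc, mem_filter] at hk ⊢
    · refine ⟨⟨Nat.mul_pos he.1 hk.1, ?_⟩, dvd_mul_right e k⟩
      rw [mul_comm]; exact (Nat.le_div_iff_mul_le he.1).1 hk.2
    · exact ⟨Nat.div_pos (Nat.le_of_dvd hk.1.1 hk.2) he.1, Nat.div_le_div_right hk.1.2⟩
    · exact Nat.mul_div_cancel_left k he.1
    · exact Nat.mul_div_cancel' hk.2
  · intro d e
    simp only [mem_Ioc, mem_divisors, mem_filter]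
    constructor
    · rintro ⟨⟨hd, hdN⟩, hed, -⟩
      exact ⟨⟨⟨hd, hdN⟩, hed⟩, Nat.pos_of_dvd_of_pos hed hd, (Nat.le_of_dvd hd hed).trans hdN⟩
    · rintro ⟨⟨⟨hd, hdN⟩, hed⟩, -⟩
      exact ⟨⟨hd, hdN⟩, hed, hd.ne'⟩

theorem Nat.sum_Ioc_squarefree_prod_primeFactors_le_exp {f : ℕ → ℝ}
    (hf : ∀ p, p.Prime → 0 ≤ f p) (N : ℕ) :
    ∑ e ∈ Ioc 0 N with Squarefree e, ∏ p ∈ e.primeFactors, f p ≤ exp (∑ p ∈ primesLE N, f p) :=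
  calc ∑ e ∈ Ioc 0 N with Squarefree e, ∏ p ∈ e.primeFactors, f p
      ≤ ∑ e ∈ (primorial N).divisors with Squarefree e, ∏ p ∈ e.primeFactors, f p := by
        refine sum_le_sum_of_subset_of_nonneg ?_ fun e _ _ =>
          prod_nonneg fun p hp => hf p (prime_of_mem_primeFactors hp)
        intro e he
        simp only [mem_filter, mem_Ioc, mem_divisors] at he ⊢
        exact ⟨⟨he.2.dvd_primorial.trans (primorial_dvd_primorial he.1.2), primorial_ne_zero N⟩,
          he.2⟩
    _ = ∏ p ∈ primesLE N, (1 + f p) := by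
        rw [← prod_primeFactors_one_add _ (primorial_ne_zero N), primeFactors_primorial]
    _ ≤ ∏ p ∈ primesLE N, exp (f p) := by
        refine prod_le_prod (fun p hp => ?_) fun p _ => ?_
        · linarith [hf p (prime_of_mem_primesLE hp)]
        · linarith [add_one_le_exp (f p)]
    _ = exp (∑ p ∈ primesLE N, f p) := (exp_sum _ _).symm

/-- For prime `p`, `1 + primeExcess p = (p / φ p)²`. -/
noncomputable def primeExcess (p : ℕ) : ℝ := ((1 - (p : ℝ)⁻¹) ^ 2)⁻¹ - 1

lemma primeExcess_nonneg {p : ℕ} (hp : 2 ≤ p) : 0 ≤ primeExcess p := by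
  have hp' : (2 : ℝ) ≤ p := by exact_mod_cast hp
  have h0 : 0 < 1 - (p : ℝ)⁻¹ := by
    rw [sub_pos]; exact inv_lt_one_of_one_lt₀ (by linarith)
  have h1 : (1 - (p : ℝ)⁻¹) ^ 2 ≤ 1 := pow_le_one₀ h0.le (by simp)
  rw [primeExcess, sub_nonneg]
  exact one_le_inv₀ (by positivity) |>.2 h1

lemma primeExcess_div_le {p : ℕ} (hp : 2 ≤ p) : primeExcess p / p ≤ 8 * ((p : ℝ) ^ 2)⁻¹ := by
  have hp' : (2 : ℝ) ≤ p := by exact_mod_cast hp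
  have h : 1 - (p : ℝ)⁻¹ = (p - 1) / p := by field_simp
  rw [primeExcess, h, div_pow, inv_div, div_le_iff₀ (by positivity)]
  rw [div_sub_one (by nlinarith), div_le_iff₀ (by nlinarith)]
  field_simp
  nlinarith

lemma div_totient_sq_eq_sum_squarefree_divisors (d : ℕ) :
    ((d : ℝ) / φ d) ^ 2 =
      ∑ e ∈ d.divisors with Squarefree e, ∏ p ∈ e.primeFactors, primeExcess p := by
  rcases eq_or_ne d 0 with rfl | hd
  · simp
  have hφ : (φ d : ℝ) = d * ∏ p ∈ d.primeFactors, (1 - (p : ℝ)⁻¹) := by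
    have h := congrArg (Rat.cast (K := ℝ)) (totient_eq_mul_prod_factors d)
    push_cast at h
    exact h
  rw [← prod_primeFactors_one_add _ hd, hφ, div_mul_cancel_left₀ (by exact_mod_cast hd),
    ← prod_inv_distrib, ← prod_pow]
  simp [primeExcess]

lemma sum_Ioc_squarefree_prod_primeExcess_div_le (N : ℕ) :
    ∑ e ∈ Ioc 0 N with Squarefree e, (∏ p ∈ e.primeFactors, primeExcess p) / e ≤ exp 8 := by
  have hsplit : ∀ e ∈ {e ∈ Ioc 0 N | Squarefree e},
      (∏ p ∈ e.primeFactors, primeExcess p) / e = ∏ p ∈ e.primeFactors, primeExcess p / p := by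
    intro e he
    rw [prod_div_distrib, ← cast_prod, prod_primeFactors_of_squarefree (mem_filter.1 he).2]
  have hprimes : ∑ p ∈ primesLE N, ((p : ℝ) ^ 2)⁻¹ ≤ 1 := by
    calc ∑ p ∈ primesLE N, ((p : ℝ) ^ 2)⁻¹ ≤ ∑ p ∈ Ioo 1 (N + 1), ((p : ℝ) ^ 2)⁻¹ := by
          refine sum_le_sum_of_subset_of_nonneg (fun p hp => ?_) fun _ _ _ => by positivity
          rw [mem_primesLE] at hp
          exact mem_Ioo.2 ⟨hp.2.one_lt, Nat.lt_succ_of_le hp.1⟩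
      _ ≤ 2 / ((1 : ℕ) + 1) := sum_Ioo_inv_sq_le 1 (N + 1)
      _ = 1 := by norm_num
  calc ∑ e ∈ Ioc 0 N with Squarefree e, (∏ p ∈ e.primeFactors, primeExcess p) / e
      = ∑ e ∈ Ioc 0 N with Squarefree e, ∏ p ∈ e.primeFactors, primeExcess p / p :=
        sum_congr rfl hsplit
    _ ≤ exp (∑ p ∈ primesLE N, primeExcess p / p) :=
        sum_Ioc_squarefree_prod_primeFactors_le_exp
          (fun p hp => div_nonneg (primeExcess_nonneg hp.two_le) (cast_nonneg p)) N
    _ ≤ exp 8 := by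
        rw [exp_le_exp]
        calc ∑ p ∈ primesLE N, primeExcess p / p ≤ ∑ p ∈ primesLE N, 8 * ((p : ℝ) ^ 2)⁻¹ :=
              sum_le_sum fun p hp => primeExcess_div_le (prime_of_mem_primesLE hp).two_le
          _ ≤ 8 := by rw [← mul_sum]; linarith

lemma sum_Ioc_div_totient_sq_mul_le {h : ℕ → ℝ} {N : ℕ} {c : ℝ} (hc0 : 0 ≤ c)
    (hc : ∀ e ∈ Ioc 0 N, ∑ k ∈ Ioc 0 (N / e), h (e * k) ≤ c / e) :
    ∑ d ∈ Ioc 0 N, ((d : ℝ) / φ d) ^ 2 * h d ≤ exp 8 * c := by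
  set W : ℕ → ℝ := fun e => ∏ p ∈ e.primeFactors, primeExcess p
  have hW : ∀ e, 0 ≤ W e := fun e =>
    prod_nonneg fun p hp => primeExcess_nonneg (prime_of_mem_primeFactors hp).two_le
  calc ∑ d ∈ Ioc 0 N, ((d : ℝ) / φ d) ^ 2 * h d
      = ∑ d ∈ Ioc 0 N, ∑ e ∈ d.divisors, if Squarefree e then W e * h d else 0 := by
        simp_rw [div_totient_sq_eq_sum_squarefree_divisors, sum_mul, sum_filter]
        rfl
    _ = ∑ e ∈ Ioc 0 N, ∑ k ∈ Ioc 0 (N / e), if Squarefree e then W e * h (e * k) else 0 :=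
        sum_Ioc_sum_divisors _ N
    _ = ∑ e ∈ Ioc 0 N with Squarefree e, W e * ∑ k ∈ Ioc 0 (N / e), h (e * k) := by
        rw [sum_filter]
        refine sum_congr rfl fun e _ => ?_
        split_ifs <;> simp [mul_sum]
    _ ≤ ∑ e ∈ Ioc 0 N with Squarefree e, W e * (c / e) :=
        sum_le_sum fun e he => mul_le_mul_of_nonneg_left (hc e (mem_filter.1 he).1) (hW e)
    _ = c * ∑ e ∈ Ioc 0 N with Squarefree e, W e / e := by
        rw [mul_sum]; exact sum_congr rfl fun e _ => by ring
    _ ≤ c * exp 8 :=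
        mul_le_mul_of_nonneg_left (sum_Ioc_squarefree_prod_primeExcess_div_le N) hc0
    _ = exp 8 * c := mul_comm _ _

theorem sum_Ioc_div_totient_sq_le (N : ℕ) :
    ∑ d ∈ Ioc 0 N, ((d : ℝ) / φ d) ^ 2 ≤ exp 8 * N := by
  simpa using sum_Ioc_div_totient_sq_mul_le (h := fun _ => 1)
    (cast_nonneg N) fun e _ => by
      simpa only [sum_const, card_Ioc, Nat.sub_zero, nsmul_eq_mul, mul_one] using Nat.cast_div_le

lemma sum_Ioc_inv_sq_of_lt_mul_le (m : ℕ) {e : ℕ} (he : 0 < e) (K : ℕ) :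
    ∑ k ∈ Ioc 0 K, (if m < e * k then (((e * k : ℕ) : ℝ) ^ 2)⁻¹ else 0) ≤ 2 / (m + 1) / e := by
  have he' : (0 : ℝ) < e := by exact_mod_cast he
  have hm : (m : ℝ) + 1 ≤ e * (m / e + 1 : ℕ) := by exact_mod_cast Nat.lt_mul_div_succ m he
  calc ∑ k ∈ Ioc 0 K, (if m < e * k then (((e * k : ℕ) : ℝ) ^ 2)⁻¹ else 0)
      = ((e : ℝ) ^ 2)⁻¹ * ∑ k ∈ Ioc 0 K with m / e < k, ((k : ℝ) ^ 2)⁻¹ := by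
        rw [sum_filter, mul_sum]
        refine sum_congr rfl fun k _ => ?_
        simp only [Nat.div_lt_iff_lt_mul he, mul_comm k e]
        split_ifs <;> push_cast <;> ring
    _ ≤ ((e : ℝ) ^ 2)⁻¹ * ∑ k ∈ Ioo (m / e) (K + 1), ((k : ℝ) ^ 2)⁻¹ := by
        gcongr
        intro k hk
        simp only [mem_filter, mem_Ioc, mem_Ioo] at hk ⊢
        omega
    _ ≤ ((e : ℝ) ^ 2)⁻¹ * (2 / ((m / e : ℕ) + 1)) := by gcongr; exact sum_Ioo_inv_sq_le _ _
    _ ≤ 2 / (m + 1) / e := by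
        rw [inv_mul_eq_div, div_div, div_div, div_le_div_iff₀ (by positivity) (by positivity)]
        push_cast at hm ⊢
        nlinarith

theorem sum_Ioc_div_totient_sq_mul_inv_sq_le (m N : ℕ) :
    ∑ d ∈ Ioc 0 N, ((d : ℝ) / φ d) ^ 2 * (if m < d then ((d : ℝ) ^ 2)⁻¹ else 0)
      ≤ exp 8 * (2 / (m + 1)) :=
  sum_Ioc_div_totient_sq_mul_le (by positivity) fun e he =>
    sum_Ioc_inv_sq_of_lt_mul_le m (mem_Ioc.1 he).1 (N / e)

noncomputable def totientTail (m d : ℕ) : ℝ := if m < d then ((m : ℝ) / φ d) ^ 2 else 0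

lemma totientTail_nonneg (m d : ℕ) : 0 ≤ totientTail m d := by
  unfold totientTail; split_ifs <;> positivity

lemma totientTail_eq_mul (m d : ℕ) :
    totientTail m d =
      m ^ 2 * (((d : ℝ) / φ d) ^ 2 * (if m < d then ((d : ℝ) ^ 2)⁻¹ else 0)) := by
  unfold totientTail
  split_ifs with h
  · have hd : (d : ℝ) ≠ 0 := by exact_mod_cast (Nat.zero_lt_of_lt h).ne'
    field_simp
  · simp

lemma sum_totientTail_le (m : ℕ) (u : Finset ℕ) :
    ∑ d ∈ u, totientTail m d ≤ 2 * exp 8 * m := by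
  set N := u.sup id
  have hm : (m : ℝ) ^ 2 * (2 / (m + 1)) ≤ 2 * m := by
    rw [mul_div_assoc', div_le_iff₀ (by positivity)]; nlinarith
  calc ∑ d ∈ u, totientTail m d ≤ ∑ d ∈ Icc 0 N, totientTail m d :=
        sum_le_sum_of_subset_of_nonneg
          (fun d hd => mem_Icc.2 ⟨d.zero_le, Finset.le_sup (f := id) hd⟩)
          fun d _ _ => totientTail_nonneg m d
    _ = ∑ d ∈ Ioc 0 N, totientTail m d := by
        rw [Icc_eq_cons_Ioc N.zero_le, sum_cons, totientTail, if_neg m.not_lt_zero, zero_add]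
    _ = m ^ 2 *
          ∑ d ∈ Ioc 0 N, ((d : ℝ) / φ d) ^ 2 * (if m < d then ((d : ℝ) ^ 2)⁻¹ else 0) := by
        simp_rw [totientTail_eq_mul, mul_sum]
    _ ≤ m ^ 2 * (exp 8 * (2 / (m + 1))) := by
        gcongr; exact sum_Ioc_div_totient_sq_mul_inv_sq_le m N
    _ ≤ 2 * exp 8 * m := by nlinarith [exp_pos 8]

lemma summable_totientTail (m : ℕ) : Summable (totientTail m) :=
  summable_of_sum_le (totientTail_nonneg m) (sum_totientTail_le m)

lemma tsum_totientTail_le (m : ℕ) : ∑' d, totientTail m d ≤ 2 * exp 8 * m :=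
  Real.tsum_le_of_sum_le (totientTail_nonneg m) (sum_totientTail_le m)

lemma ncard_setOf_totient_le_le (m : ℕ) :
    ({d : ℕ | 1 ≤ d ∧ φ d ≤ m}.ncard : ℝ) ≤ m + ∑' d, totientTail m d := by
  set S := {d : ℕ | 1 ≤ d ∧ φ d ≤ m}
  by_cases hS : S.Finite
  swap
  · rw [Set.Infinite.ncard hS]; push_cast
    exact add_nonneg (cast_nonneg m) (tsum_nonneg (totientTail_nonneg m))
  have hmem : ∀ d, d ∈ hS.toFinset ↔ 1 ≤ d ∧ φ d ≤ m := fun d => hS.mem_toFinset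
  set T := {d ∈ hS.toFinset | m < d}
  have hcard : S.ncard ≤ m + #T := by
    rw [Set.ncard_eq_toFinset_card S hS]
    calc #hS.toFinset ≤ #(Icc 1 m ∪ T) := card_le_card fun d hd => by
          simp only [hmem, mem_union, mem_Icc, mem_filter, T] at hd ⊢
          omega
      _ ≤ #(Icc 1 m) + #T := card_union_le _ _
      _ = m + #T := by rw [card_Icc]; rfl
  have hT : (#T : ℝ) ≤ ∑ d ∈ T, totientTail m d := by
    rw [card_eq_sum_ones, cast_sum, cast_one]
    refine sum_le_sum fun d hd => ?_
    simp only [T, mem_filter, hmem] at hd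
    have hφ : (0 : ℝ) < φ d := by exact_mod_cast totient_pos.2 hd.1.1
    have : (1 : ℝ) ≤ m / φ d := by rw [le_div_iff₀ hφ, one_mul]; exact_mod_cast hd.1.2
    rw [totientTail, if_pos hd.2]; nlinarith
  calc (S.ncard : ℝ) ≤ m + #T := by exact_mod_cast hcard
    _ ≤ m + ∑' d, totientTail m d := by
        gcongr
        exact hT.trans <|
          (summable_totientTail m).sum_le_tsum T fun d _ => totientTail_nonneg m d

/-- `#{d : φ(d) ≤ m₀} = O(m₀)`; more precisely
`#{d : φ(d) ≤ m₀} ≤ m₀ + ∑_{d > m₀} (m₀/φ(d))²` and `∑_{d ≤ x} (d/φ(d))² = O(x)`. -/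
theorem stmt_5 :
    (∀ m₀ : ℕ, (({d : ℕ | 1 ≤ d ∧ Nat.totient d ≤ m₀}.ncard : ℝ)
        ≤ (m₀ : ℝ) + ∑' d : ℕ, if m₀ < d then ((m₀ : ℝ) / Nat.totient d) ^ 2 else 0)) ∧
    (∃ C : ℝ, 0 < C ∧ ∀ x : ℝ, 1 ≤ x →
        ∑ d ∈ Finset.Icc 1 ⌊x⌋₊, ((d : ℝ) / Nat.totient d) ^ 2 ≤ C * x) ∧
    (∃ C : ℝ, 0 < C ∧ ∀ m₀ : ℕ,
        (({d : ℕ | 1 ≤ d ∧ Nat.totient d ≤ m₀}.ncard : ℝ)) ≤ C * m₀) := by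
  refine ⟨ncard_setOf_totient_le_le, ⟨exp 8, exp_pos 8, fun x hx => ?_⟩,
    ⟨1 + 2 * exp 8, by positivity, fun m => ?_⟩⟩
  · calc ∑ d ∈ Icc 1 ⌊x⌋₊, ((d : ℝ) / φ d) ^ 2 ≤ exp 8 * ⌊x⌋₊ :=
          sum_Ioc_div_totient_sq_le _
      _ ≤ exp 8 * x := by gcongr; exact Nat.floor_le (by linarith)
  · calc ({d : ℕ | 1 ≤ d ∧ φ d ≤ m}.ncard : ℝ) ≤ m + ∑' d, totientTail m d :=
          ncard_setOf_totient_le_le m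
      _ ≤ m + 2 * exp 8 * m := by gcongr; exact tsum_totientTail_le m
      _ = (1 + 2 * exp 8) * m := by ring
end

section
/- Let p be a prime and m ≥ 1 an integer. Let 𝓘 be the set of monic irreducible polynomials I ∈ 𝔽_p[T] with I ≠ T and deg I ≤ m. Then ∏_{I ∈ 𝓘} (1 - 1/p^{deg I}) ≤ 2/(m+1). -/
/-!
Write `q = |K|`. Every monic polynomial of degree at most `m` over `K` factors uniquely into monic
irreducibles of degree at most `m`, each occurring at most `m` times, so expanding the product of
truncated geometric series gives the Euler-product bound
`∑_{A monic, deg A ≤ m} q^{-deg A} ≤ ∏_{I monic irreducible, deg I ≤ m} (1 - q^{-deg I})⁻¹`.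
There are `q^d` monic polynomials of degree `d`, so the left side is `m + 1`. Splitting off the
factor `1 - 1/q ≥ 1/2` of `I = X` gives the theorem.
-/

open Polynomial UniqueFactorizationMonoid Finset

theorem one_sub_one_div_pow_pos {q : ℝ} (hq : 1 < q) {n : ℕ} (hn : n ≠ 0) : 0 < 1 - 1 / q ^ n :=
  sub_pos.mpr <| (div_lt_one (by positivity)).mpr <| one_lt_pow₀ hq hn

namespace Polynomial

variable {K : Type*} [Field K]

theorem card_monic_natDegree_eq (n : ℕ) :
    Nat.card {p : K[X] // p.Monic ∧ p.natDegree = n} = Nat.card K ^ n := by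
  rw [Nat.card_congr ((monicEquivDegreeLT n).trans (degreeLTEquiv K n).toEquiv), Nat.card_fun,
    Nat.card_fin]

section Factorization

variable [DecidableEq K]

theorem prod_pow_count_normalizedFactors {A : K[X]} (hA : A.Monic) {P : Finset K[X]}
    (hP : ∀ I ∈ normalizedFactors A, I ∈ P) :
    ∏ I ∈ P, I ^ (normalizedFactors A).count I = A := by
  rw [← prod_multiset_count_of_subset _ _ fun I hI => hP I (Multiset.mem_toFinset.mp hI),
    prod_normalizedFactors_eq hA.ne_zero, hA.normalize_eq_self]

end Factorization

theorem natDegree_prod_pow_eq {P : Finset K[X]} (hP : ∀ I ∈ P, I ≠ 0) (g : P → ℕ) :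
    (∏ I : P, (I : K[X]) ^ g I).natDegree = ∑ I : P, g I * (I : K[X]).natDegree := by
  rw [natDegree_prod _ _ fun I _ => pow_ne_zero _ (hP _ I.2)]
  simp only [natDegree_pow]

variable [Finite K]

variable (K) in
theorem finite_setOf_natDegree_le (m : ℕ) : {p : K[X] | p.natDegree ≤ m}.Finite := by
  have : Finite (degreeLE K m) :=
    degreeLT_succ_eq_degreeLE (R := K) ▸ .of_equiv _ (degreeLTEquiv K (m + 1)).toEquiv.symm
  convert Set.toFinite (degreeLE K m : Set K[X]) using 1
  ext p
  simp [mem_degreeLE, natDegree_le_iff_degree_le]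

variable (K) in
noncomputable def monicUpTo (m : ℕ) : Finset K[X] :=
  ((finite_setOf_natDegree_le K m).subset fun _ h => h.2).toFinset
    (s := {A | A.Monic ∧ A.natDegree ≤ m})

variable (K) in
noncomputable def monicIrreducibleUpTo (m : ℕ) : Finset K[X] :=
  ((finite_setOf_natDegree_le K m).subset fun _ h => h.2.2).toFinset
    (s := {I | I.Monic ∧ Irreducible I ∧ I.natDegree ≤ m})

@[simp]
theorem mem_monicUpTo {m : ℕ} {A : K[X]} : A ∈ monicUpTo K m ↔ A.Monic ∧ A.natDegree ≤ m := by
  simp [monicUpTo]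

@[simp]
theorem mem_monicIrreducibleUpTo {m : ℕ} {I : K[X]} :
    I ∈ monicIrreducibleUpTo K m ↔ I.Monic ∧ Irreducible I ∧ I.natDegree ≤ m := by
  simp [monicIrreducibleUpTo]

theorem sum_monicUpTo_one_div_pow_natDegree (m : ℕ) :
    ∑ A ∈ monicUpTo K m, 1 / (Nat.card K : ℝ) ^ A.natDegree = m + 1 := by
  have hq : (Nat.card K : ℝ) ≠ 0 := by exact_mod_cast Nat.card_pos.ne'
  rw [← sum_fiberwise_of_maps_to (g := natDegree) (t := range (m + 1))
    fun A hA => mem_range_succ_iff.mpr (mem_monicUpTo.mp hA).2]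
  have hfiber : ∀ d ∈ range (m + 1),
      #{A ∈ monicUpTo K m | A.natDegree = d} = Nat.card K ^ d := fun d hd => by
    rw [← card_monic_natDegree_eq d, ← Nat.card_eq_finsetCard]
    refine Nat.card_congr (Equiv.subtypeEquivRight fun A => ?_)
    simp only [mem_filter, mem_monicUpTo]
    have := mem_range_succ_iff.mp hd
    exact ⟨fun h => ⟨h.1.1, h.2⟩, fun h => ⟨⟨h.1, h.2 ▸ this⟩, h.2⟩⟩
  calc ∑ d ∈ range (m + 1), ∑ A ∈ monicUpTo K m with A.natDegree = d,
        1 / (Nat.card K : ℝ) ^ A.natDegree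
      = ∑ d ∈ range (m + 1), (1 : ℝ) := sum_congr rfl fun d hd => by
        rw [sum_congr rfl fun A hA => by rw [(mem_filter.mp hA).2], sum_const, hfiber d hd,
          nsmul_eq_mul]
        push_cast
        field_simp
    _ = m + 1 := by simp

theorem sum_monicUpTo_pow_natDegree_le {x : ℝ} (hx0 : 0 ≤ x) (hx1 : x < 1) (m : ℕ) :
    ∑ A ∈ monicUpTo K m, x ^ A.natDegree ≤
      ∏ I ∈ monicIrreducibleUpTo K m, (1 - x ^ I.natDegree)⁻¹ := by
  classical
  set P := monicIrreducibleUpTo K m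
  have hP0 : ∀ I ∈ P, I ≠ 0 := fun I hI => (mem_monicIrreducibleUpTo.mp hI).2.1.ne_zero
  let F : (P → ℕ) → K[X] := fun g => ∏ I : P, (I : K[X]) ^ g I
  have hcover : monicUpTo K m ⊆ (Fintype.piFinset fun _ => range (m + 1)).image F := by
    intro A hA
    obtain ⟨hmonic, hdeg⟩ := mem_monicUpTo.mp hA
    have hfactors : ∀ I ∈ normalizedFactors A, I ∈ P := fun I hI => by
      obtain ⟨hirr, hImonic, hdvd⟩ := (Polynomial.mem_normalizedFactors_iff hmonic.ne_zero).mp hI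
      exact mem_monicIrreducibleUpTo.mpr
        ⟨hImonic, hirr, (natDegree_le_of_dvd hdvd hmonic.ne_zero).trans hdeg⟩
    have hFA : F (fun I => (normalizedFactors A).count (I : K[X])) = A :=
      (prod_coe_sort P _).trans (prod_pow_count_normalizedFactors hmonic hfactors)
    refine mem_image.mpr ⟨_, Fintype.mem_piFinset.mpr fun I => mem_range_succ_iff.mpr ?_, hFA⟩
    calc (normalizedFactors A).count (I : K[X])
        ≤ (normalizedFactors A).count (I : K[X]) * (I : K[X]).natDegree :=
          Nat.le_mul_of_pos_right _ (mem_monicIrreducibleUpTo.mp I.2).2.1.natDegree_pos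
      _ ≤ (F fun I => (normalizedFactors A).count (I : K[X])).natDegree := by
          rw [natDegree_prod_pow_eq hP0]
          exact single_le_sum
            (f := fun I : P => (normalizedFactors A).count (I : K[X]) * (I : K[X]).natDegree)
            (fun _ _ => Nat.zero_le _) (mem_univ I)
      _ = A.natDegree := congrArg natDegree hFA
      _ ≤ m := hdeg
  have hgeom : ∀ I ∈ P,
      ∑ j ∈ range (m + 1), (x ^ I.natDegree) ^ j ≤ (1 - x ^ I.natDegree)⁻¹ := fun I hI => by
    have hpos := (mem_monicIrreducibleUpTo.mp hI).2.1.natDegree_pos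
    simpa [← range_eq_Ico] using geom_sum_Ico_le_of_lt_one (m := 0) (n := m + 1)
      (by positivity) (pow_lt_one₀ hx0 hx1 hpos.ne')
  calc ∑ A ∈ monicUpTo K m, x ^ A.natDegree
      ≤ ∑ A ∈ (Fintype.piFinset fun _ => range (m + 1)).image F, x ^ A.natDegree :=
        sum_le_sum_of_subset_of_nonneg hcover fun _ _ _ => by positivity
    _ ≤ ∑ g ∈ Fintype.piFinset fun _ => range (m + 1), x ^ (F g).natDegree :=
        sum_image_le_of_nonneg fun _ _ => by positivity
    _ = ∏ I : P, ∑ j ∈ range (m + 1), (x ^ (I : K[X]).natDegree) ^ j := by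
        rw [prod_univ_sum]
        refine sum_congr rfl fun g _ => ?_
        simp only [F, natDegree_prod_pow_eq hP0, ← pow_mul, prod_pow_eq_pow_sum, mul_comm]
    _ ≤ ∏ I : P, (1 - x ^ (I : K[X]).natDegree)⁻¹ :=
        prod_le_prod (fun _ _ => sum_nonneg fun _ _ => by positivity)
          fun I _ => hgeom I I.2
    _ = ∏ I ∈ P, (1 - x ^ I.natDegree)⁻¹ := prod_coe_sort P fun I => (1 - x ^ I.natDegree)⁻¹

theorem prod_monicIrreducibleUpTo_one_sub_le (m : ℕ) :
    ∏ I ∈ monicIrreducibleUpTo K m, (1 - 1 / (Nat.card K : ℝ) ^ I.natDegree) ≤ 1 / (m + 1) := by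
  have hq : (1 : ℝ) < Nat.card K := by exact_mod_cast Finite.one_lt_card
  have hpos : 0 < ∏ I ∈ monicIrreducibleUpTo K m, (1 - 1 / (Nat.card K : ℝ) ^ I.natDegree) :=
    prod_pos fun I hI =>
      one_sub_one_div_pow_pos hq (mem_monicIrreducibleUpTo.mp hI).2.1.natDegree_pos.ne'
  have heuler := sum_monicUpTo_pow_natDegree_le (K := K) (x := 1 / Nat.card K) (by positivity)
    ((div_lt_one (by positivity)).mpr hq) m
  simp only [one_div_pow] at heuler
  rw [sum_monicUpTo_one_div_pow_natDegree, prod_inv_distrib] at heuler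
  rw [one_div]
  exact (le_inv_comm₀ (by positivity) hpos).mp heuler

end Polynomial

/-- Let `𝓘` be the set of monic irreducible polynomials `I ∈ 𝔽_p[T]` with `I ≠ T` and
`deg I ≤ m`. Then `∏_{I ∈ 𝓘} (1 - 1/p^{deg I}) ≤ 2/(m+1)`. -/
theorem stmt_7 (p : ℕ) (hp : p.Prime) (m : ℕ) (hm : 1 ≤ m) :
    (∏ᶠ (I : Polynomial (ZMod p))
        (_ : I.Monic ∧ Irreducible I ∧ I ≠ Polynomial.X ∧ I.natDegree ≤ m),
          (1 - 1 / (p : ℝ) ^ I.natDegree))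
      ≤ 2 / ((m : ℝ) + 1) := by
  have : Fact p.Prime := ⟨hp⟩
  have hX : X ∈ monicIrreducibleUpTo (ZMod p) m :=
    mem_monicIrreducibleUpTo.mpr ⟨monic_X, irreducible_X, by simpa using hm⟩
  rw [finprod_cond_eq_prod_of_cond_iff _ (t := (monicIrreducibleUpTo (ZMod p) m).erase X)
    fun _ => by rw [mem_erase, mem_monicIrreducibleUpTo]; tauto]
  have hbound := prod_monicIrreducibleUpTo_one_sub_le (K := ZMod p) m
  rw [Nat.card_zmod, ← mul_prod_erase _ _ hX, natDegree_X, pow_one] at hbound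
  set R := ∏ I ∈ (monicIrreducibleUpTo (ZMod p) m).erase X, (1 - 1 / (p : ℝ) ^ I.natDegree)
  have hinv : 1 / (p : ℝ) ≤ 1 / 2 := one_div_le_one_div_of_le two_pos (by exact_mod_cast hp.two_le)
  have hR : 0 ≤ R := prod_nonneg fun I hI => (one_sub_one_div_pow_pos (by exact_mod_cast
    hp.one_lt) (mem_monicIrreducibleUpTo.mp (mem_of_mem_erase hI)).2.1.natDegree_pos.ne').le
  calc R ≤ 2 * ((1 - 1 / p) * R) := by nlinarith
    _ ≤ 2 * (1 / (m + 1)) := by gcongr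
    _ = 2 / (m + 1) := by ring
end

section
/- Let p be a prime, m ≥ 1 and ℓ ≥ m/2 integers, and f_0, ..., f_{m-1} : ℝ/ℤ → ℝ_{≥0}. Then ∑_{H monic, deg H = ℓ} ∑_{G mod H, gcd(G,H)=1} ∏_{j=0}^{m-1} f_j(ψ_p(T^j G/H)) ≤ p^{2ℓ - m} ∏_{j=0}^{m-1} (∑_{ξ ∈ ℤ/pℤ} f_j(ξ/p)), where ψ_p(X) = res(X)/p ∈ ℝ/ℤ and G/H is computed in 𝔽_p((1/T)). -/
open Polynomial

/-- The value `ψ_p(T^j G/H) ∈ ℝ/ℤ`, where `ψ_p(X) = res(X)/p` and `res` is the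
coefficient of `T^{-1}` of the Laurent expansion at infinity: writing
`T^j G = Q·H + R` with `deg R < deg H` (`H` monic), `res(T^j G/H)` equals the
coefficient of `T^{deg H - 1}` in `R = (T^j G) mod H`. -/
noncomputable def psiFrac (p : ℕ) (j : ℕ) (G H : Polynomial (ZMod p)) :
    AddCircle (1 : ℝ) :=
  ((((Polynomial.X ^ j * G) %ₘ H).coeff (H.natDegree - 1)).val / (p : ℝ) : ℝ)

/-!
The residues `res(T^j G/H)`, `j < m`, are the coefficients of `T^{-1}, …, T^{-m}` in the expansion
of `G/H` at infinity. If two reduced fractions `G/H`, `G₀/H₀` with `deg H = deg H₀ = ℓ` share them,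
then `G H₀ - G₀ H` has degree `< 2ℓ - m` (the polynomial form of the spacing of Farey fractions);
and since `G₀/H₀` is reduced, `(H, G) ↦ G H₀ - G₀ H` is injective on such fractions. So every fibre
of the residue vector `(res(T^j G/H))_{j<m} ∈ 𝔽_p^m` has at most `p^{2ℓ-m}` elements, and summing
fibre by fibre factorises `∑_v ∏_j f_j(v_j/p) = ∏_j ∑_ξ f_j(ξ/p)`.
-/

open Finset

theorem Finset.sum_comp_le_nsmul_of_card_fiber_le {ι κ M : Type*} [Fintype κ] [DecidableEq κ]
    [AddCommMonoid M] [PartialOrder M] [IsOrderedAddMonoid M] (s : Finset ι) (g : ι → κ)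
    {f : κ → M} (hf : ∀ k, 0 ≤ f k) {N : ℕ} (hN : ∀ k, #{i ∈ s | g i = k} ≤ N) :
    ∑ i ∈ s, f (g i) ≤ N • ∑ k, f k := by
  rw [← sum_fiberwise' s g f, smul_sum]
  gcongr with k
  rw [sum_const]
  exact nsmul_le_nsmul_left (hf k) (hN k)

namespace Polynomial

theorem finite_setOf_degree_lt {R : Type*} [Semiring R] [Finite R] (n : ℕ) :
    {P : R[X] | P.degree < n}.Finite := by
  have : Finite (degreeLT R n) := .of_equiv _ (degreeLTEquiv R n).toEquiv.symm
  exact (degreeLT R n : Set R[X]).toFinite.subset fun P hP => mem_degreeLT.2 hP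

theorem card_le_of_injOn_degree_lt {R α : Type*} [Semiring R] [Fintype R] {s : Finset α}
    {φ : α → R[X]} {n : ℕ} (hφ : Set.InjOn φ s) (hdeg : ∀ a ∈ s, (φ a).degree < n) :
    #s ≤ Fintype.card R ^ n := by
  calc #s ≤ #(univ : Finset (Fin n → R)) := by
        refine card_le_card_of_injOn (fun a i => (φ a).coeff i)
          (fun _ _ => mem_coe.2 (mem_univ _)) ?_
        intro a ha b hb hab
        exact hφ ha hb <| congrArg Subtype.val <| (degreeLTEquiv R n).injective
          (a₁ := ⟨φ a, mem_degreeLT.2 (hdeg a ha)⟩) (a₂ := ⟨φ b, mem_degreeLT.2 (hdeg b hb)⟩) hab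
    _ = Fintype.card R ^ n := by simp

variable {R : Type*} [CommRing R]

/-- `res(T^j G/H)`: the coefficient of `T^{-j-1}` in the expansion of `G/H` at infinity. -/
noncomputable def residueCoeff (j : ℕ) (G H : R[X]) : R :=
  ((X ^ j * G) %ₘ H).coeff (H.natDegree - 1)

variable (R) in
/-- The reduced fractions `G/H` with `H` monic of degree `ℓ`, recorded as pairs `(H, G)`. -/
def fareySet (ℓ : ℕ) : Set (R[X] × R[X]) :=
  {x | x.1.Monic ∧ x.1.natDegree = ℓ ∧ x.2.degree < x.1.degree ∧ IsCoprime x.2 x.1}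

noncomputable def residueVector (m : ℕ) (x : R[X] × R[X]) : Fin m → R :=
  fun j => residueCoeff j x.2 x.1

section Nontrivial

variable [Nontrivial R]

theorem divByMonic_X_mul {H : R[X]} (hH : H.Monic) (hpos : 0 < H.natDegree) (P : R[X]) :
    (X * P) /ₘ H = X * (P /ₘ H) + C ((P %ₘ H).coeff (H.natDegree - 1)) := by
  set n := H.natDegree
  set c := (P %ₘ H).coeff (n - 1)
  have hdegH : H.degree = n := degree_eq_natDegree hH.ne_zero
  have hrem : ∀ i, n ≤ i → (P %ₘ H).coeff i = 0 :=
    (degree_lt_iff_coeff_zero _ _).1 (hdegH ▸ degree_modByMonic_lt P hH)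
  refine (div_modByMonic_unique _ (X * (P %ₘ H) - C c * H) hH ⟨?_, ?_⟩).1
  · linear_combination X * modByMonic_add_div P H
  rw [hdegH, degree_lt_iff_coeff_zero]
  intro i hi
  obtain ⟨i, rfl⟩ : ∃ k, i = k + 1 := ⟨i - 1, by omega⟩
  rw [coeff_sub, coeff_X_mul, coeff_C_mul]
  rcases hi.eq_or_lt with h | h
  · rw [← h, hH.coeff_natDegree, mul_one, show i = n - 1 by omega, sub_self]
  · rw [hrem i (by omega), coeff_eq_zero_of_natDegree_lt h, mul_zero, sub_zero]

theorem divByMonic_X_pow_mul_eq_of_residueCoeff_eq {G G' H H' : R[X]} (hH : H.Monic)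
    (hH' : H'.Monic) (hpos : 0 < H.natDegree) (hHH' : H'.natDegree = H.natDegree)
    (hG : G.degree < H.degree) (hG' : G'.degree < H'.degree) {m : ℕ}
    (hres : ∀ j < m, residueCoeff j G H = residueCoeff j G' H') :
    (X ^ m * G) /ₘ H = (X ^ m * G') /ₘ H' := by
  induction m with
  | zero => simp [(divByMonic_eq_zero_iff hH).2 hG, (divByMonic_eq_zero_iff hH').2 hG']
  | succ m ih =>
    have hres_m := hres m m.lt_succ_self
    rw [residueCoeff, residueCoeff, hHH'] at hres_m
    rw [pow_succ', mul_assoc, mul_assoc, divByMonic_X_mul hH hpos,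
      divByMonic_X_mul hH' (hHH' ▸ hpos), ih fun j hj => hres j (by omega), hHH', hres_m]

theorem degree_mul_sub_mul_lt_of_residueCoeff_eq {G G' H H' : R[X]} {ℓ m : ℕ} (hℓ : 0 < ℓ)
    (hH : H.Monic) (hH' : H'.Monic) (hHℓ : H.natDegree = ℓ) (hH'ℓ : H'.natDegree = ℓ)
    (hG : G.degree < H.degree) (hG' : G'.degree < H'.degree)
    (hres : ∀ j < m, residueCoeff j G H = residueCoeff j G' H') :
    (G * H' - G' * H).degree < ↑(2 * ℓ - m) := by
  set r := (X ^ m * G) %ₘ H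
  set r' := (X ^ m * G') %ₘ H'
  have hquot := divByMonic_X_pow_mul_eq_of_residueCoeff_eq hH hH' (hHℓ ▸ hℓ)
    (hH'ℓ.trans hHℓ.symm) hG hG' hres
  have hclear : X ^ m * (G * H' - G' * H) = r * H' - r' * H := by
    linear_combination -H' * modByMonic_add_div (X ^ m * G) H
      + H * modByMonic_add_div (X ^ m * G') H' + H * H' * hquot
  have hr : r.natDegree < ℓ :=
    hHℓ ▸ natDegree_modByMonic_lt _ hH fun h => by simp [h] at hHℓ; omega
  have hr' : r'.natDegree < ℓ :=
    hH'ℓ ▸ natDegree_modByMonic_lt _ hH' fun h => by simp [h] at hH'ℓ; omega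
  rw [degree_lt_iff_coeff_zero]
  intro i hi
  have h₁ := natDegree_mul_le (p := r) (q := H')
  have h₂ := natDegree_mul_le (p := r') (q := H)
  rw [← coeff_X_pow_mul _ m, hclear, coeff_sub, coeff_eq_zero_of_natDegree_lt (by omega),
    coeff_eq_zero_of_natDegree_lt (by omega), sub_zero]

theorem fareySet_finite [Finite R] (ℓ : ℕ) : (fareySet R ℓ).Finite := by
  refine ((finite_setOf_degree_lt (ℓ + 1)).prod (finite_setOf_degree_lt (ℓ + 1))).subset ?_
  rintro ⟨H, G⟩ ⟨hH, hHℓ, hG, -⟩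
  have hdeg : H.degree < ↑(ℓ + 1) := by
    rw [degree_eq_natDegree hH.ne_zero, hHℓ]
    exact_mod_cast ℓ.lt_succ_self
  exact ⟨hdeg, hG.trans hdeg⟩

theorem finsum_finsum_eq_sum_fareySet [Finite R] {M : Type*} [AddCommMonoid M] (ℓ : ℕ)
    (F : R[X] → R[X] → M) :
    (∑ᶠ (H : R[X]) (_ : H.Monic ∧ H.natDegree = ℓ),
      ∑ᶠ (G : R[X]) (_ : G.degree < H.degree ∧ IsCoprime G H), F G H)
      = ∑ x ∈ (fareySet_finite ℓ).toFinset, F x.2 x.1 := by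
  have hmonic : {H : R[X] | H.Monic ∧ H.natDegree = ℓ}.Finite :=
    (finite_setOf_degree_lt (ℓ + 1)).subset fun H ⟨hH, hHℓ⟩ => by
      rw [Set.mem_ofPred_eq, degree_eq_natDegree hH.ne_zero, hHℓ]
      exact_mod_cast ℓ.lt_succ_self
  have hcoprime : ∀ H : R[X], {G | G.degree < H.degree ∧ IsCoprime G H}.Finite := fun H =>
    (finite_setOf_degree_lt (H.natDegree + 1)).subset fun G hG =>
      hG.1.trans_le (degree_le_natDegree.trans (by exact_mod_cast H.natDegree.le_succ))
  rw [sum_finset_product _ hmonic.toFinset (fun H => (hcoprime H).toFinset) fun x => by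
      simp [fareySet, and_assoc]]
  refine (finsum_cond_eq_sum_of_cond_iff _ fun _ => hmonic.mem_toFinset.symm).trans
    (sum_congr rfl fun H _ => ?_)
  exact finsum_cond_eq_sum_of_cond_iff _ fun _ => (hcoprime H).mem_toFinset.symm

end Nontrivial

section IsDomain

variable [IsDomain R]

theorem eq_of_mul_sub_mul_eq {G G' G₀ H H' H₀ : R[X]} (hcop : IsCoprime G₀ H₀) (hH₀ : H₀ ≠ 0)
    (hH : H.Monic) (hH' : H'.Monic) (hHH₀ : H.natDegree = H₀.natDegree)
    (hH'H₀ : H'.natDegree = H₀.natDegree) (h : G * H₀ - G₀ * H = G' * H₀ - G₀ * H') :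
    H = H' ∧ G = G' := by
  have hdvd : H₀ ∣ H - H' := hcop.symm.dvd_of_dvd_mul_left ⟨G - G', by linear_combination -h⟩
  have hdeg : (H - H').degree < H₀.degree := by
    calc (H - H').degree < H.degree := degree_sub_lt_left
          (by rw [degree_eq_natDegree hH.ne_zero, degree_eq_natDegree hH'.ne_zero, hHH₀, hH'H₀])
          hH.ne_zero
          (by rw [hH.leadingCoeff, hH'.leadingCoeff])
      _ = H₀.degree := by rw [degree_eq_natDegree hH.ne_zero, degree_eq_natDegree hH₀, hHH₀]
  obtain rfl : H = H' := sub_eq_zero.1 (eq_zero_of_dvd_of_degree_lt hdvd hdeg)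
  exact ⟨rfl, mul_right_cancel₀ hH₀ (by linear_combination h)⟩

theorem card_filter_residueVector_eq_le [Fintype R] [DecidableEq R] {ℓ m : ℕ} (hℓ : 0 < ℓ)
    {s : Finset (R[X] × R[X])} (hs : ↑s ⊆ fareySet R ℓ) (v : Fin m → R) :
    #{x ∈ s | residueVector m x = v} ≤ Fintype.card R ^ (2 * ℓ - m) := by
  rcases eq_empty_or_nonempty {x ∈ s | residueVector m x = v} with hempty | ⟨x₀, hx₀⟩
  · simp [hempty]
  obtain ⟨hx₀s, hx₀v⟩ := mem_filter.1 hx₀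
  obtain ⟨hH₀, hH₀ℓ, hG₀, hcop₀⟩ := hs hx₀s
  refine card_le_of_injOn_degree_lt (φ := fun x => x.2 * x₀.1 - x₀.2 * x.1) ?_ ?_
  · intro x hx y hy hxy
    obtain ⟨hH, hHℓ, -, -⟩ := hs (mem_filter.1 hx).1
    obtain ⟨hH', hH'ℓ, -, -⟩ := hs (mem_filter.1 hy).1
    obtain ⟨h₁, h₂⟩ := eq_of_mul_sub_mul_eq hcop₀ hH₀.ne_zero hH hH' (hHℓ.trans hH₀ℓ.symm)
      (hH'ℓ.trans hH₀ℓ.symm) hxy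
    exact Prod.ext h₁ h₂
  · intro x hx
    obtain ⟨hxs, hxv⟩ := mem_filter.1 hx
    obtain ⟨hH, hHℓ, hG, -⟩ := hs hxs
    exact degree_mul_sub_mul_lt_of_residueCoeff_eq hℓ hH hH₀ hHℓ hH₀ℓ hG hG₀
      fun j hj => congrFun (hxv.trans hx₀v.symm) ⟨j, hj⟩

theorem sum_prod_residueCoeff_le [Fintype R] {S : Type*} [CommSemiring S] [PartialOrder S]
    [IsOrderedRing S] {ℓ m : ℕ} (hℓ : 0 < ℓ) {s : Finset (R[X] × R[X])}
    (hs : ↑s ⊆ fareySet R ℓ) (F : ℕ → R → S) (hF : ∀ j ξ, 0 ≤ F j ξ) :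
    ∑ x ∈ s, ∏ j ∈ range m, F j (residueCoeff j x.2 x.1)
      ≤ (Fintype.card R : S) ^ (2 * ℓ - m) * ∏ j ∈ range m, ∑ ξ, F j ξ := by
  classical
  calc ∑ x ∈ s, ∏ j ∈ range m, F j (residueCoeff j x.2 x.1)
      = ∑ x ∈ s, ∏ j : Fin m, F j (residueVector m x j) := by
        refine sum_congr rfl fun x _ => ?_
        exact (Fin.prod_univ_eq_prod_range (fun j => F j (residueCoeff j x.2 x.1)) m).symm
    _ ≤ (Fintype.card R ^ (2 * ℓ - m)) • ∑ v : Fin m → R, ∏ j : Fin m, F j (v j) :=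
        sum_comp_le_nsmul_of_card_fiber_le s (residueVector m)
          (f := fun v => ∏ j : Fin m, F j (v j))
          (fun v => prod_nonneg fun _ _ => hF _ _)
          (card_filter_residueVector_eq_le hℓ hs)
    _ = (Fintype.card R : S) ^ (2 * ℓ - m) * ∏ j ∈ range m, ∑ ξ, F j ξ := by
        rw [← Fintype.prod_sum, Fin.prod_univ_eq_prod_range (fun j => ∑ ξ, F j ξ), nsmul_eq_mul,
          Nat.cast_pow]

end IsDomain

end Polynomial

/-- Large sieve type inequality in `𝔽_p[T]`: for `ℓ ≥ m/2` and
`f_0, …, f_{m-1} : ℝ/ℤ → ℝ_{≥0}`,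
`∑_{H monic, deg H = ℓ} ∑_{G mod H, (G,H)=1} ∏_{j<m} f_j(ψ_p(T^j G/H))
  ≤ p^{2ℓ-m} ∏_{j<m} ∑_{ξ ∈ ℤ/pℤ} f_j(ξ/p)`. -/
theorem stmt_9 (p : ℕ) [hp : Fact p.Prime] (m ℓ : ℕ) (hm : 1 ≤ m) (hℓ : m ≤ 2 * ℓ)
    (f : ℕ → AddCircle (1 : ℝ) → ℝ) (hf : ∀ j x, 0 ≤ f j x) :
    (∑ᶠ (H : Polynomial (ZMod p)) (_ : H.Monic ∧ H.natDegree = ℓ),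
      ∑ᶠ (G : Polynomial (ZMod p)) (_ : G.degree < H.degree ∧ IsCoprime G H),
        ∏ j ∈ Finset.range m, f j (psiFrac p j G H))
      ≤ (p : ℝ) ^ (2 * ℓ - m) *
          ∏ j ∈ Finset.range m, ∑ ξ : ZMod p, f j (((ξ.val : ℝ) / (p : ℝ) : ℝ)) := by
  rw [finsum_finsum_eq_sum_fareySet]
  have h := sum_prod_residueCoeff_le (m := m) (by omega) (fareySet_finite ℓ).coe_toFinset.subset
    (fun j (ξ : ZMod p) => f j ((ξ.val / p : ℝ) : AddCircle (1 : ℝ))) fun _ _ => hf _ _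
  rwa [ZMod.card] at h
end

section
/- Let p be a prime, and let 𝓘 be a finite set of monic irreducible polynomials in 𝔽_p[T] all of degree ≤ ℓ, where ℓ ≥ 11. Set v = ⌈3/2 + 2 log ℓ⌉. Then ∑_{G | ∏_{I ∈ 𝓘} I, ω(G) = 2v+1} 1/p^{deg G} ≤ ∏_{I ∈ 𝓘} (1 - 1/p^{deg I}), where G ranges over monic squarefree polynomials that are products of exactly 2v+1 distinct elements of 𝓘. -/
open Polynomial

/-- The number of monic irreducible divisors of a polynomial. -/
noncomputable def omegaPoly (p : ℕ) (G : Polynomial (ZMod p)) : ℕ :=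
  {I : Polynomial (ZMod p) | I.Monic ∧ Irreducible I ∧ I ∣ G}.ncard

lemma aux_irred_dvd (p : ℕ) [Fact p.Prime] (I : Polynomial (ZMod p)) (hIi : Irreducible I) :
    I ∣ X ^ (p ^ I.natDegree) - X := by
  haveI : Fact (Irreducible I) := ⟨hIi⟩
  have hI0 : I ≠ 0 := hIi.ne_zero
  let pb := AdjoinRoot.powerBasis hI0
  haveI : Module.Finite (ZMod p) (AdjoinRoot I) := Module.Finite.of_basis pb.basis
  haveI : Finite (AdjoinRoot I) := Module.finite_of_finite (ZMod p)
  haveI : Fintype (AdjoinRoot I) := Fintype.ofFinite _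
  have hcard : Fintype.card (AdjoinRoot I) = p ^ I.natDegree := by
    rw [Module.card_eq_pow_finrank (K := ZMod p), ZMod.card, pb.finrank]
    rfl
  rw [← AdjoinRoot.mk_eq_zero, ← AdjoinRoot.aeval_eq]
  simp only [map_sub, aeval_X_pow, aeval_X]
  rw [← hcard, sub_eq_zero, FiniteField.pow_card]

lemma aux_setEq (p : ℕ) [Fact p.Prime] (T : Finset (Polynomial (ZMod p)))
    (hT : ∀ I ∈ T, I.Monic ∧ Irreducible I) :
    {J : Polynomial (ZMod p) | J.Monic ∧ Irreducible J ∧ J ∣ ∏ I ∈ T, I} = ↑T := by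
  ext J
  simp only [Set.mem_setOf_eq, Finset.mem_coe]
  constructor
  · rintro ⟨hJm, hJi, hJd⟩
    obtain ⟨I, hIT, hJI⟩ :=
      (irreducible_iff_prime.mp hJi).exists_mem_finset_dvd hJd
    obtain ⟨hIm, hIi⟩ := hT I hIT
    rwa [eq_of_monic_of_associated hJm hIm (hJi.associated_of_dvd hIi hJI)]
  · intro hJ
    exact ⟨(hT J hJ).1, (hT J hJ).2, Finset.dvd_prod_of_mem _ hJ⟩

lemma aux_omega_prod (p : ℕ) [Fact p.Prime] (T : Finset (Polynomial (ZMod p)))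
    (hT : ∀ I ∈ T, I.Monic ∧ Irreducible I) :
    omegaPoly p (∏ I ∈ T, I) = T.card := by
  rw [omegaPoly, aux_setEq p T hT, Set.ncard_coe_finset]

lemma aux_monic_dvd (p : ℕ) [Fact p.Prime] (𝓘 : Finset (Polynomial (ZMod p))) :
    (∀ I ∈ 𝓘, I.Monic ∧ Irreducible I) → ∀ G : Polynomial (ZMod p), G.Monic →
      G ∣ ∏ I ∈ 𝓘, I → ∃ T, T ⊆ 𝓘 ∧ G = ∏ I ∈ T, I := by
  classical
  induction 𝓘 using Finset.induction_on with
  | empty =>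
      intro _ G hGm hGd
      exact ⟨∅, Finset.Subset.refl _,
        by simpa using hGm.eq_one_of_isUnit (isUnit_of_dvd_one (by simpa using hGd))⟩
  | @insert a s ha ih =>
      intro h G hGm hGd
      rw [Finset.prod_insert ha] at hGd
      have ham := (h a (Finset.mem_insert_self a s)).1
      have hai := (h a (Finset.mem_insert_self a s)).2
      have hs : ∀ I ∈ s, I.Monic ∧ Irreducible I := fun I hI => h I (Finset.mem_insert_of_mem hI)
      by_cases hda : a ∣ G
      · obtain ⟨G', rfl⟩ := hda
        have hG'm : G'.Monic := ham.of_mul_monic_left hGm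
        have hG'd : G' ∣ ∏ I ∈ s, I := (mul_dvd_mul_iff_left ham.ne_zero).mp hGd
        obtain ⟨T, hTs, rfl⟩ := ih hs G' hG'm hG'd
        have haT : a ∉ T := fun hc => ha (hTs hc)
        exact ⟨insert a T, Finset.insert_subset_insert a hTs, (Finset.prod_insert (f := id) haT).symm⟩
      · have hcop : IsCoprime G a := ((hai.coprime_iff_not_dvd).mpr hda).symm
        obtain ⟨T, hTs, rfl⟩ := ih hs G hGm (hcop.dvd_of_dvd_mul_left hGd)
        exact ⟨T, hTs.trans (Finset.subset_insert a s), rfl⟩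


lemma aux_binom (x y : ℝ) (hx : 0 ≤ x) (hy : 0 ≤ y) (n : ℕ) :
    x ^ (n + 1) + (n + 1) * y * x ^ n ≤ (x + y) ^ (n + 1) := by
  induction n with
  | zero => norm_num
  | succ n ih =>
      have hxn : (0:ℝ) ≤ x ^ n := pow_nonneg hx n
      have hxn1 : (0:ℝ) ≤ x ^ (n + 1) := pow_nonneg hx (n + 1)
      have hxy : (0:ℝ) ≤ x + y := by linarith
      have hn0 : (0:ℝ) ≤ (n:ℝ) := Nat.cast_nonneg n
      have h2 : (x + y) * (x ^ (n+1) + (n+1) * y * x ^ n) ≤ (x + y) * (x + y) ^ (n+1) :=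
        mul_le_mul_of_nonneg_left ih hxy
      have hpow : x ^ (n + 2) = x * x ^ (n + 1) := by ring
      have hpow2 : x ^ (n + 1) = x * x ^ n := by ring
      have hpow3 : (x + y) ^ (n + 2) = (x + y) * (x + y) ^ (n + 1) := by ring
      push_cast
      calc x ^ (n+1+1) + ((n:ℝ)+1+1) * y * x ^ (n+1)
          ≤ (x + y) * (x ^ (n+1) + ((n:ℝ)+1) * y * x ^ n) := by
            have hz2 : x ^ (n+1+1) = x * (x * x ^ n) := by ring
            have hz : x ^ (n+1) = x * x ^ n := by ring
            rw [hz2, hz]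
            nlinarith [mul_nonneg (mul_nonneg hy hy) hxn,
              mul_nonneg hn0 (mul_nonneg (mul_nonneg hy hy) hxn)]
        _ ≤ (x + y) * (x + y) ^ (n+1) := h2
        _ = (x + y) ^ (n+1+1) := by ring

lemma aux_esymm {α : Type*} [DecidableEq α] (f : α → ℝ) :
    ∀ s : Finset α, (∀ i ∈ s, 0 ≤ f i) → ∀ n : ℕ,
      ∑ T ∈ s.powersetCard n, ∏ i ∈ T, f i ≤ (∑ i ∈ s, f i) ^ n / n.factorial := by
  intro s
  induction s using Finset.induction_on with
  | empty =>
      intro _ n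
      cases n with
      | zero => simp
      | succ n =>
          rw [Finset.powersetCard_eq_empty.mpr (by simp)]
          simp
  | @insert a s ha ih =>
      intro hf n
      have hfa : 0 ≤ f a := hf a (Finset.mem_insert_self a s)
      have hfs : ∀ i ∈ s, 0 ≤ f i := fun i hi => hf i (Finset.mem_insert_of_mem hi)
      have hS0 : 0 ≤ ∑ i ∈ s, f i := Finset.sum_nonneg hfs
      cases n with
      | zero => simp
      | succ n =>
          rw [Finset.powersetCard_succ_insert ha]
          have hdisj : Disjoint (s.powersetCard (n+1)) ((s.powersetCard n).image (insert a)) := by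
            rw [Finset.disjoint_left]
            intro T hT hT'
            obtain ⟨U, hU, rfl⟩ := Finset.mem_image.mp hT'
            exact ha ((Finset.mem_powersetCard.mp hT).1 (Finset.mem_insert_self a U))
          rw [Finset.sum_union hdisj]
          have himg : ∑ T ∈ (s.powersetCard n).image (insert a), ∏ i ∈ T, f i
              = f a * ∑ T ∈ s.powersetCard n, ∏ i ∈ T, f i := by
            rw [Finset.sum_image, Finset.mul_sum]
            · apply Finset.sum_congr rfl
              intro T hT
              have haT : a ∉ T := fun hc => ha ((Finset.mem_powersetCard.mp hT).1 hc)
              rw [Finset.prod_insert haT]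
            · intro T hT U hU hEq
              have haT : a ∉ T := fun hc => ha ((Finset.mem_powersetCard.mp hT).1 hc)
              have haU : a ∉ U := fun hc => ha ((Finset.mem_powersetCard.mp hU).1 hc)
              rw [← Finset.erase_insert haT, ← Finset.erase_insert haU, hEq]
          rw [himg, Finset.sum_insert ha]
          have h1 := ih hfs (n+1)
          have h2 := ih hfs n
          set S := ∑ i ∈ s, f i with hS
          have hfs' : ((n+1).factorial : ℝ) = (n+1) * n.factorial := by
            rw [Nat.factorial_succ]; push_cast; ring
          have key : S ^ (n+1) / (n+1).factorial + f a * (S ^ n / n.factorial)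
              ≤ (f a + S) ^ (n+1) / (n+1).factorial := by
            have hbin : S ^ (n+1) + (n+1) * f a * S ^ n ≤ (f a + S) ^ (n+1) := by
              rw [add_comm (f a) S]; exact aux_binom S (f a) hS0 hfa n
            have hnf : (0:ℝ) < n.factorial := by positivity
            have e1 : S ^ (n+1) / ((n+1).factorial:ℝ) + f a * (S^n / n.factorial)
                = (S^(n+1) + (n+1) * f a * S^n) / ((n+1).factorial:ℝ) := by
              rw [hfs']; field_simp
            rw [e1]
            gcongr
          calc ∑ T ∈ s.powersetCard (n+1), ∏ i ∈ T, f i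
                + f a * ∑ T ∈ s.powersetCard n, ∏ i ∈ T, f i
              ≤ S ^ (n+1) / (n+1).factorial + f a * (S ^ n / n.factorial) :=
                add_le_add h1 (mul_le_mul_of_nonneg_left h2 hfa)
            _ ≤ (f a + S) ^ (n+1) / (n+1).factorial := key


lemma aux_fact : ∀ n : ℕ, (n:ℝ) ^ n ≤ Real.exp 1 ^ n * n.factorial := by
  intro n
  induction n with
  | zero => simp
  | succ n ih =>
      rcases Nat.eq_zero_or_pos n with rfl | hn
      · simpa using Real.one_le_exp (by norm_num)
      · have hn' : (0:ℝ) < n := by exact_mod_cast hn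
        have h1 : ((n:ℝ) + 1) ^ n ≤ Real.exp 1 * (n:ℝ) ^ n := by
          have hle : (n:ℝ) + 1 ≤ (n:ℝ) * Real.exp (1 / n) := by
            have h0 := Real.add_one_le_exp (1 / (n:ℝ))
            have h2 := mul_le_mul_of_nonneg_left h0 (le_of_lt hn')
            calc (n:ℝ) + 1 = (n:ℝ) * (1/(n:ℝ) + 1) := by field_simp; ring
              _ ≤ (n:ℝ) * Real.exp (1/(n:ℝ)) := h2
          have hstep : ((n:ℝ) + 1) ^ n ≤ ((n:ℝ) * Real.exp (1/(n:ℝ))) ^ n :=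
            pow_le_pow_left₀ (by positivity) hle n
          have hexp : ((n:ℝ) * Real.exp (1/(n:ℝ))) ^ n = (n:ℝ) ^ n * Real.exp 1 := by
            rw [mul_pow, ← Real.exp_nat_mul]
            congr 2
            field_simp
          rw [hexp] at hstep
          linarith
        rw [Nat.factorial_succ]
        push_cast
        calc ((n:ℝ)+1)^(n+1) = ((n:ℝ)+1)^n * ((n:ℝ)+1) := pow_succ _ _
          _ ≤ (Real.exp 1 * (n:ℝ)^n) * ((n:ℝ)+1) :=
              mul_le_mul_of_nonneg_right h1 (by positivity)
          _ ≤ (Real.exp 1 * (Real.exp 1 ^ n * n.factorial)) * ((n:ℝ)+1) :=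
              mul_le_mul_of_nonneg_right
                (mul_le_mul_of_nonneg_left ih (Real.exp_pos 1).le) (by positivity)
          _ = Real.exp 1 ^ (n+1) * (((n:ℝ)+1) * (n.factorial:ℝ)) := by ring

lemma aux_pointwise (x : ℝ) (h0 : 0 ≤ x) (h2 : x ≤ 1/2) :
    Real.exp ((4 - 4 * Real.log 4) * x) ≤ 1 - x := by
  have key := convexOn_exp.2 (Set.mem_univ (0:ℝ)) (Set.mem_univ (2 - 2 * Real.log 4))
      (by linarith : (0:ℝ) ≤ 1 - 2*x) (by linarith : (0:ℝ) ≤ 2*x) (by ring)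
  rw [smul_eq_mul, smul_eq_mul, mul_zero, zero_add] at key
  have e1 : Real.exp (2 - 2*Real.log 4) = Real.exp 1 ^ 2 / 16 := by
    rw [Real.exp_sub]
    rw [show (2:ℝ)*Real.log 4 = Real.log 4 + Real.log 4 by ring, Real.exp_add,
      Real.exp_log (by norm_num : (0:ℝ) < 4)]
    rw [show (2:ℝ) = 1+1 by norm_num, Real.exp_add]
    ring
  rw [show (2*x) * (2 - 2*Real.log 4) = (4 - 4*Real.log 4) * x by ring, Real.exp_zero, e1] at key
  have he : Real.exp 1 < 2.7182818286 := Real.exp_one_lt_d9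
  have he0 : 0 < Real.exp 1 := Real.exp_pos 1
  have h8 : Real.exp 1 ^ 2 ≤ 8 := by nlinarith
  simp only [smul_eq_mul] at key
  nlinarith [mul_le_mul_of_nonneg_left h8 h0]

lemma aux_count (p : ℕ) [Fact p.Prime] (ℓ : ℕ) (hℓ : 1 ≤ ℓ)
    (𝓘 : Finset (Polynomial (ZMod p)))
    (h𝓘 : ∀ I ∈ 𝓘, I.Monic ∧ Irreducible I ∧ I.natDegree ≤ ℓ) :
    ∑ I ∈ 𝓘, (1:ℝ) / (p:ℝ) ^ I.natDegree ≤ 1 + Real.log ℓ := by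
  classical
  have hp2 : 2 ≤ p := (Fact.out : p.Prime).two_le
  have hmap : ∀ I ∈ 𝓘, I.natDegree ∈ Finset.Icc 1 ℓ := fun I hI =>
    Finset.mem_Icc.mpr ⟨(h𝓘 I hI).2.1.natDegree_pos, (h𝓘 I hI).2.2⟩
  rw [← Finset.sum_fiberwise_of_maps_to hmap]
  have hstep : ∀ d ∈ Finset.Icc 1 ℓ,
      ∑ I ∈ 𝓘.filter (fun I => I.natDegree = d), (1:ℝ)/(p:ℝ)^I.natDegree ≤ 1/(d:ℝ) := by
    intro d hd
    obtain ⟨hd1, hdℓ⟩ := Finset.mem_Icc.mp hd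
    set s := 𝓘.filter (fun I => I.natDegree = d) with hs
    have hmem : ∀ I ∈ s, I.Monic ∧ Irreducible I ∧ I.natDegree = d := by
      intro I hI
      obtain ⟨hI𝓘, hId⟩ := Finset.mem_filter.mp hI
      exact ⟨(h𝓘 I hI𝓘).1, (h𝓘 I hI𝓘).2.1, hId⟩
    have hppow : 1 < p ^ d := Nat.one_lt_pow (by omega) (by omega)
    have hcard : s.card * d ≤ p ^ d := by
      have hdvd : (∏ I ∈ s, I) ∣ (X ^ (p^d) - X : (ZMod p)[X]) := by
        apply Finset.prod_dvd_of_coprime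
        · intro I hI J hJ hIJ
          obtain ⟨hIm, hIi, -⟩ := hmem I hI
          obtain ⟨hJm, hJi, -⟩ := hmem J hJ
          exact (hIi.coprime_iff_not_dvd).mpr fun hdvd =>
            hIJ (eq_of_monic_of_associated hIm hJm (hIi.associated_of_dvd hJi hdvd))
        · intro I hI
          obtain ⟨-, hIi, hId⟩ := hmem I hI
          have := aux_irred_dvd p I hIi
          rwa [hId] at this
      have hne : (X ^ (p^d) - X : (ZMod p)[X]) ≠ 0 :=
        FiniteField.X_pow_card_sub_X_ne_zero _ hppow
      have hdeg := Polynomial.natDegree_le_of_dvd hdvd hne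
      rw [Polynomial.natDegree_prod _ _ (fun I hI => (hmem I hI).2.1.ne_zero),
        FiniteField.X_pow_card_sub_X_natDegree_eq _ hppow,
        Finset.sum_congr rfl (fun I hI => (hmem I hI).2.2),
        Finset.sum_const, smul_eq_mul] at hdeg
      exact hdeg
    have hsum : ∑ I ∈ s, (1:ℝ)/(p:ℝ)^I.natDegree = s.card / (p:ℝ)^d := by
      rw [Finset.sum_congr rfl (fun I hI => by rw [(hmem I hI).2.2]),
        Finset.sum_const, nsmul_eq_mul]
      ring
    rw [hsum]
    have hd0 : (0:ℝ) < d := by exact_mod_cast hd1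
    have hppow' : (0:ℝ) < (p:ℝ)^d := by positivity
    rw [div_le_div_iff₀ hppow' hd0]
    calc (s.card : ℝ) * d = (s.card * d : ℕ) := by push_cast; ring
      _ ≤ ((p^d : ℕ) : ℝ) := by exact_mod_cast hcard
      _ = 1 * (p:ℝ)^d := by push_cast; ring
  calc ∑ d ∈ Finset.Icc 1 ℓ, ∑ I ∈ 𝓘.filter (fun I => I.natDegree = d),
          (1:ℝ)/(p:ℝ)^I.natDegree
      ≤ ∑ d ∈ Finset.Icc 1 ℓ, 1/(d:ℝ) := Finset.sum_le_sum hstep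
    _ = ((harmonic ℓ : ℚ) : ℝ) := by
        rw [harmonic_eq_sum_Icc]
        push_cast
        simp [one_div]
    _ ≤ 1 + Real.log ℓ := harmonic_le_one_add_log ℓ

/-- Let `𝓘` be a finite set of monic irreducible polynomials in `𝔽_p[T]` of degree
`≤ ℓ`, with `ℓ ≥ 11`, and set `v = ⌈3/2 + 2 log ℓ⌉`. Then
`∑_{G | ∏_{I∈𝓘} I, ω(G) = 2v+1} 1/p^{deg G} ≤ ∏_{I∈𝓘} (1 - 1/p^{deg I})`,
where `G` ranges over monic (squarefree) divisors of `∏_{I∈𝓘} I` with exactly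
`2v+1` irreducible factors. -/
theorem stmt_13 (p : ℕ) (hp : p.Prime) (ℓ : ℕ) (hℓ : 11 ≤ ℓ)
    (𝓘 : Finset (Polynomial (ZMod p)))
    (h𝓘 : ∀ I ∈ 𝓘, I.Monic ∧ Irreducible I ∧ I.natDegree ≤ ℓ) :
    (∑ᶠ (G : Polynomial (ZMod p))
        (_ : G.Monic ∧ G ∣ (∏ I ∈ 𝓘, I) ∧
          omegaPoly p G = 2 * ⌈(3 : ℝ) / 2 + 2 * Real.log ℓ⌉₊ + 1),
        (1 : ℝ) / (p : ℝ) ^ G.natDegree)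
      ≤ ∏ I ∈ 𝓘, (1 - 1 / (p : ℝ) ^ I.natDegree) := by
  classical
  haveI : Fact p.Prime := ⟨hp⟩
  set v : ℕ := ⌈(3 : ℝ) / 2 + 2 * Real.log ℓ⌉₊ with hv
  set n : ℕ := 2 * v + 1 with hn
  set S : ℝ := ∑ I ∈ 𝓘, (1:ℝ)/(p:ℝ)^I.natDegree with hS
  have hmi : ∀ I ∈ 𝓘, I.Monic ∧ Irreducible I := fun I hI => ⟨(h𝓘 I hI).1, (h𝓘 I hI).2.1⟩
  have hp2 : (2:ℝ) ≤ (p:ℝ) := by exact_mod_cast hp.two_le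
  have hx0 : ∀ I ∈ 𝓘, (0:ℝ) ≤ 1/(p:ℝ)^I.natDegree := by
    intro I hI
    positivity
  have hx2 : ∀ I ∈ 𝓘, 1/(p:ℝ)^I.natDegree ≤ 1/2 := by
    intro I hI
    have hd := (h𝓘 I hI).2.1.natDegree_pos
    have hpow : (2:ℝ) ≤ (p:ℝ)^I.natDegree := by
      calc (2:ℝ) ≤ (p:ℝ) := hp2
        _ = (p:ℝ)^1 := (pow_one _).symm
        _ ≤ (p:ℝ)^I.natDegree := pow_le_pow_right₀ (by linarith) hd
    exact one_div_le_one_div_of_le (by norm_num) hpow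
  -- Step 1: rewrite the LHS as a sum over subsets
  have hinj : ∀ T ∈ 𝓘.powersetCard n, ∀ T' ∈ 𝓘.powersetCard n,
      (∏ I ∈ T, I) = (∏ I ∈ T', I) → T = T' := by
    intro T hT T' hT' hEq
    have hTm : ∀ I ∈ T, I.Monic ∧ Irreducible I :=
      fun I hI => hmi I ((Finset.mem_powersetCard.mp hT).1 hI)
    have hT'm : ∀ I ∈ T', I.Monic ∧ Irreducible I :=
      fun I hI => hmi I ((Finset.mem_powersetCard.mp hT').1 hI)
    apply Finset.coe_injective
    rw [← aux_setEq p T hTm, ← aux_setEq p T' hT'm, hEq]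
  have hsetEq : {G : Polynomial (ZMod p) | G.Monic ∧ G ∣ (∏ I ∈ 𝓘, I) ∧ omegaPoly p G = n}
      = ↑((𝓘.powersetCard n).image fun T => ∏ I ∈ T, I) := by
    ext G
    simp only [Set.mem_setOf_eq, Finset.coe_image, Set.mem_image, Finset.mem_coe,
      Finset.mem_powersetCard]
    constructor
    · rintro ⟨hGm, hGd, hGo⟩
      obtain ⟨T, hT𝓘, rfl⟩ := aux_monic_dvd p 𝓘 hmi G hGm hGd
      have hTm : ∀ I ∈ T, I.Monic ∧ Irreducible I := fun I hI => hmi I (hT𝓘 hI)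
      rw [aux_omega_prod p T hTm] at hGo
      exact ⟨T, ⟨hT𝓘, hGo⟩, rfl⟩
    · rintro ⟨T, ⟨hT𝓘, hTc⟩, rfl⟩
      have hTm : ∀ I ∈ T, I.Monic ∧ Irreducible I := fun I hI => hmi I (hT𝓘 hI)
      exact ⟨monic_prod_of_monic _ _ (fun I hI => (hTm I hI).1),
        Finset.prod_dvd_prod_of_subset _ _ _ hT𝓘,
        by rw [aux_omega_prod p T hTm, hTc]⟩
  have hLHS : (∑ᶠ (G : Polynomial (ZMod p))
        (_ : G.Monic ∧ G ∣ (∏ I ∈ 𝓘, I) ∧ omegaPoly p G = n),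
        (1 : ℝ) / (p : ℝ) ^ G.natDegree)
      = ∑ T ∈ 𝓘.powersetCard n, ∏ I ∈ T, (1:ℝ)/(p:ℝ)^I.natDegree := by
    have h1 : (∑ᶠ (G : Polynomial (ZMod p))
        (_ : G.Monic ∧ G ∣ (∏ I ∈ 𝓘, I) ∧ omegaPoly p G = n),
        (1 : ℝ) / (p : ℝ) ^ G.natDegree)
        = ∑ᶠ G ∈ {G : Polynomial (ZMod p) | G.Monic ∧ G ∣ (∏ I ∈ 𝓘, I) ∧ omegaPoly p G = n},
          (1 : ℝ) / (p : ℝ) ^ G.natDegree := rfl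
    rw [h1, hsetEq, finsum_mem_coe_finset, Finset.sum_image hinj]
    apply Finset.sum_congr rfl
    intro T hT
    have hTm : ∀ I ∈ T, I.Monic ∧ Irreducible I :=
      fun I hI => hmi I ((Finset.mem_powersetCard.mp hT).1 hI)
    rw [Polynomial.natDegree_prod _ _ (fun I hI => (hTm I hI).2.ne_zero),
      ← Finset.prod_pow_eq_pow_sum]
    rw [one_div, ← Finset.prod_inv_distrib]
    simp [one_div]
  rw [hLHS]
  -- Step 2: basic size facts
  have hS0 : 0 ≤ S := Finset.sum_nonneg hx0
  have hℓ1 : (1:ℝ) ≤ (ℓ:ℝ) := by exact_mod_cast le_trans (by norm_num) hℓ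
  have hlog0 : 0 ≤ Real.log ℓ := Real.log_nonneg hℓ1
  have hS1 : S ≤ 1 + Real.log ℓ := aux_count p ℓ (by omega) 𝓘 h𝓘
  have h4S : 4 * S ≤ (n:ℝ) := by
    have hv' : (3:ℝ)/2 + 2*Real.log ℓ ≤ v := Nat.le_ceil _
    have hcast : (n:ℝ) = 2*(v:ℝ)+1 := by rw [hn]; push_cast; ring
    rw [hcast]
    linarith
  have hn1 : (0:ℝ) < (n:ℝ) := by
    have : 0 < n := by omega
    exact_mod_cast this
  -- Step 3: chain of inequalities
  have hexp1 : (0:ℝ) < Real.exp 1 := Real.exp_pos 1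
  have hchain : (∑ T ∈ 𝓘.powersetCard n, ∏ I ∈ T, (1:ℝ)/(p:ℝ)^I.natDegree)
      ≤ Real.exp ((4 - 4*Real.log 4) * S) := by
    have h2 := aux_esymm (fun I => (1:ℝ)/(p:ℝ)^I.natDegree) 𝓘 hx0 n
    rw [← hS] at h2
    refine h2.trans ?_
    rcases eq_or_lt_of_le hS0 with hS0' | hSpos
    · rw [← hS0']
      rw [zero_pow (by omega : n ≠ 0), zero_div]
      positivity
    · have hfacpos : (0:ℝ) < (n.factorial : ℝ) := by positivity
      have hnn : (0:ℝ) < (n:ℝ)^n := by positivity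
      calc S^n / n.factorial ≤ S^n * Real.exp 1 ^ n / (n:ℝ)^n := by
            rw [div_le_div_iff₀ hfacpos hnn]
            calc S^n * (n:ℝ)^n ≤ S^n * (Real.exp 1 ^ n * n.factorial) :=
                  mul_le_mul_of_nonneg_left (aux_fact n) (pow_nonneg hS0 n)
              _ = S^n * Real.exp 1 ^ n * n.factorial := by ring
        _ ≤ ((n:ℝ)/4)^n * Real.exp 1 ^ n / (n:ℝ)^n := by
            gcongr
            linarith
        _ = (Real.exp 1 / 4)^n := by
            field_simp
            ring
        _ = Real.exp ((1 - Real.log 4) * (n:ℝ)) := by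
            rw [show (1-Real.log 4)*(n:ℝ) = (n:ℝ)*(1-Real.log 4) by ring,
              Real.exp_nat_mul, Real.exp_sub, Real.exp_log (by norm_num : (0:ℝ) < 4)]
        _ ≤ Real.exp ((4 - 4*Real.log 4) * S) := by
            apply Real.exp_le_exp.mpr
            have hlog4 : 1 < Real.log 4 := by
              rw [Real.lt_log_iff_exp_lt (by norm_num)]
              exact lt_trans Real.exp_one_lt_d9 (by norm_num)
            nlinarith [mul_nonneg (sub_nonneg.mpr hlog4.le) (sub_nonneg.mpr h4S)]
  refine hchain.trans ?_
  -- Step 4: RHS lower bound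
  have hRHS : Real.exp ((4 - 4*Real.log 4) * S)
      = ∏ I ∈ 𝓘, Real.exp ((4 - 4*Real.log 4) * (1/(p:ℝ)^I.natDegree)) := by
    rw [← Real.exp_sum, hS, Finset.mul_sum]
  rw [hRHS]
  apply Finset.prod_le_prod
  · intro I hI
    exact (Real.exp_pos _).le
  · intro I hI
    exact aux_pointwise _ (hx0 I hI) (hx2 I hI)
end
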